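/- arXiv:1811.00103 — 6 statements merged into one kernel-verified Lean document; each statement's English description precedes it below -/
import Mathlib

section
/- Let U ∈ ℝ^{m×n} with rank(U) ≤ d, partitioned by rows into U_A and U_B corresponding to row-blocks A ∈ ℝ^{m₁×n} and B ∈ ℝ^{m₂×n} of a data matrix. Let V ∈ ℝ^{n×d} have orthonormal columns spanning the row space of U. Then loss(A, A V Vᵀ) ≤ loss(A, U_A) and loss(B, B V Vᵀ) ≤ loss(B, U_B), and hence max{loss(A,A V Vᵀ)/m₁, loss(B,B V Vᵀ)/m₂} ≤ max{loss(A,U_A)/m₁, loss(B,U_B)/m₂}. -/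
open Matrix BigOperators

/-- Squared Frobenius norm of a real matrix. -/
noncomputable def frobSq {m n : Type*} [Fintype m] [Fintype n]
    (M : Matrix m n ℝ) : ℝ := ∑ i, ∑ j, (M i j) ^ 2

/-- `Ahat` is an optimal rank-`d` approximation of `A` in Frobenius norm. -/
def IsOptRankApprox {m n : Type*} [Fintype m] [Fintype n] [DecidableEq n]
    (d : ℕ) (A Ahat : Matrix m n ℝ) : Prop :=
  Ahat.rank ≤ d ∧
    ∀ Z : Matrix m n ℝ, Z.rank ≤ d → frobSq (A - Ahat) ≤ frobSq (A - Z)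

lemma row_proj_le {n d : ℕ} (V : Matrix (Fin n) (Fin d) ℝ) (hV : Vᵀ * V = 1)
    (a w : Fin n → ℝ)
    (hw : w ∈ Submodule.span ℝ (Set.range fun j : Fin d => (fun k => V k j))) :
    ∑ j, (a j - (V * Vᵀ).mulVec a j)^2 ≤ ∑ j, (a j - w j)^2 := by
  set P : Matrix (Fin n) (Fin n) ℝ := V * Vᵀ with hP
  have hPsym : Pᵀ = P := by
    simp [hP, Matrix.transpose_mul]
  have hPP : P * P = P := by
    calc P * P = V * (Vᵀ * V) * Vᵀ := by rw [hP]; rw [Matrix.mul_assoc, Matrix.mul_assoc, Matrix.mul_assoc]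
    _ = P := by rw [hV]; simp [hP]
  have hPw : P.mulVec w = w := by
    have : w ∈ LinearMap.ker (P.mulVecLin - LinearMap.id) := by
      refine Submodule.span_le.mpr ?_ hw
      rintro x ⟨j, rfl⟩
      have hcol : (fun k => V k j) = V.mulVec (Pi.single j 1) := by
        funext k
        simp [Matrix.mulVec, dotProduct, Pi.single_apply, mul_comm]
      simp only [SetLike.mem_coe, LinearMap.mem_ker, LinearMap.sub_apply,
        Matrix.mulVecLin_apply, LinearMap.id_apply, sub_eq_zero]
      rw [hcol, Matrix.mulVec_mulVec, hP, Matrix.mul_assoc, hV, Matrix.mul_one]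
    simpa [sub_eq_zero] using this
  set r : Fin n → ℝ := a - P.mulVec a with hr
  set s : Fin n → ℝ := P.mulVec a - w with hs
  have hPr : P.mulVec r = 0 := by
    rw [hr]
    rw [Matrix.mulVec_sub, Matrix.mulVec_mulVec, hPP, sub_self]
  have hrs : r ⬝ᵥ s = 0 := by
    have hsP : s = P.mulVec (a - w) := by
      rw [hs, Matrix.mulVec_sub, hPw]
    rw [hsP, Matrix.dotProduct_mulVec]
    have : r ᵥ* P = P.mulVec r := by rw [← hPsym, Matrix.mulVec_transpose, hPsym]
    rw [this, hPr]
    simp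
  have key : ∀ j, a j - w j = r j + s j := by
    intro j; simp [hr, hs]
  calc ∑ j, (a j - P.mulVec a j)^2 = ∑ j, r j ^ 2 := by simp [hr]
    _ ≤ ∑ j, r j ^ 2 + ∑ j, s j ^ 2 := by
        have : (0:ℝ) ≤ ∑ j, s j ^ 2 := Finset.sum_nonneg fun j _ => sq_nonneg _
        linarith
    _ = ∑ j, (a j - w j)^2 := by
        rw [← Finset.sum_add_distrib]
        have h2 : (2:ℝ) * (r ⬝ᵥ s) = 0 := by rw [hrs]; ring
        calc ∑ j, (r j ^ 2 + s j ^ 2)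
            = ∑ j, (r j ^2 + s j ^2) + 2 * (r ⬝ᵥ s) := by rw [h2]; ring
          _ = ∑ j, ((r j + s j)^2) := by
              rw [dotProduct, Finset.mul_sum, ← Finset.sum_add_distrib]
              exact Finset.sum_congr rfl fun j _ => by ring
          _ = _ := by simp_rw [← key]

/-- Projecting onto the span of an orthonormal basis of the row space of `U`
does not increase the loss of either group, hence not the fairness objective. -/
theorem loss_proj_le_loss {m₁ m₂ n d : ℕ} (hm₁ : 0 < m₁) (hm₂ : 0 < m₂)
    (A Ahat : Matrix (Fin m₁) (Fin n) ℝ) (B Bhat : Matrix (Fin m₂) (Fin n) ℝ)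
    (hA : IsOptRankApprox d A Ahat) (hB : IsOptRankApprox d B Bhat)
    (U : Matrix (Fin m₁ ⊕ Fin m₂) (Fin n) ℝ) (hU : U.rank ≤ d)
    (V : Matrix (Fin n) (Fin d) ℝ) (hV : Vᵀ * V = 1)
    (hspan : Submodule.span ℝ (Set.range fun i => U i) ≤
      Submodule.span ℝ (Set.range fun j : Fin d => (fun k => V k j))) :
    (frobSq (A - A * V * Vᵀ) - frobSq (A - Ahat) ≤
        frobSq (A - U.submatrix Sum.inl id) - frobSq (A - Ahat)) ∧
    (frobSq (B - B * V * Vᵀ) - frobSq (B - Bhat) ≤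
        frobSq (B - U.submatrix Sum.inr id) - frobSq (B - Bhat)) ∧
    max ((frobSq (A - A * V * Vᵀ) - frobSq (A - Ahat)) / m₁)
        ((frobSq (B - B * V * Vᵀ) - frobSq (B - Bhat)) / m₂) ≤
      max ((frobSq (A - U.submatrix Sum.inl id) - frobSq (A - Ahat)) / m₁)
          ((frobSq (B - U.submatrix Sum.inr id) - frobSq (B - Bhat)) / m₂) := by
  set P : Matrix (Fin n) (Fin n) ℝ := V * Vᵀ with hP
  have hPsym : Pᵀ = P := by simp [hP, Matrix.transpose_mul]
  have key : ∀ {m : ℕ} (C : Matrix (Fin m) (Fin n) ℝ) (i : Fin m) (j : Fin n),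
      (C * V * Vᵀ) i j = P.mulVec (C i) j := by
    intro m C i j
    rw [Matrix.mul_assoc]
    simp only [Matrix.mul_apply, Matrix.mulVec, dotProduct, ← hP]
    refine Finset.sum_congr rfl fun k _ => ?_
    have : P j k = P k j := by conv_lhs => rw [← hPsym, Matrix.transpose_apply]
    rw [this, mul_comm]
  have hblockA : frobSq (A - A * V * Vᵀ) ≤ frobSq (A - U.submatrix Sum.inl id) := by
    unfold frobSq
    refine Finset.sum_le_sum fun i _ => ?_
    have hw : U (Sum.inl i) ∈
        Submodule.span ℝ (Set.range fun j : Fin d => (fun k => V k j)) :=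
      hspan (Submodule.subset_span ⟨Sum.inl i, rfl⟩)
    have h := row_proj_le V hV (A i) (U (Sum.inl i)) hw
    simpa [Matrix.sub_apply, key, Matrix.submatrix_apply, ← hP] using h
  have hblockB : frobSq (B - B * V * Vᵀ) ≤ frobSq (B - U.submatrix Sum.inr id) := by
    unfold frobSq
    refine Finset.sum_le_sum fun i _ => ?_
    have hw : U (Sum.inr i) ∈
        Submodule.span ℝ (Set.range fun j : Fin d => (fun k => V k j)) :=
      hspan (Submodule.subset_span ⟨Sum.inr i, rfl⟩)
    have h := row_proj_le V hV (B i) (U (Sum.inr i)) hw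
    simpa [Matrix.sub_apply, key, Matrix.submatrix_apply, ← hP] using h
  refine ⟨sub_le_sub_right hblockA _, sub_le_sub_right hblockB _, ?_⟩
  apply max_le_max
  · gcongr
  · gcongr
end

section
/- Let A ∈ ℝ^{m×n} and define g_A on d-dimensional subspaces U ⊆ ℝⁿ by g_A(U) = ‖A − A U Uᵀ‖_F² (where U also denotes a matrix whose columns are an orthonormal basis of the subspace). Then g_A attains the same value at every local minimum; in particular every local minimum of g_A is a global minimum. -/
open Matrix BigOperators

/-- `P` is the matrix of an orthogonal projection onto a `d`-dimensional
subspace of ℝⁿ. -/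
def IsProjOfRank {n : ℕ} (d : ℕ) (P : Matrix (Fin n) (Fin n) ℝ) : Prop :=
  Pᵀ = P ∧ P * P = P ∧ P.rank = d

/-- `P` is a local minimum of `g_A(P) = ‖A − A P‖_F²` over orthogonal
projections of rank `d` (neighborhoods measured in Frobenius distance). -/
def IsLocalMinProj {m n : ℕ} (d : ℕ) (A : Matrix (Fin m) (Fin n) ℝ)
    (P : Matrix (Fin n) (Fin n) ℝ) : Prop :=
  IsProjOfRank d P ∧ ∃ ε > (0 : ℝ), ∀ Q : Matrix (Fin n) (Fin n) ℝ,
    IsProjOfRank d Q → frobSq (Q - P) < ε →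
      frobSq (A - A * P) ≤ frobSq (A - A * Q)

namespace GAhelper

variable {m n : ℕ}

lemma frobSq_eq_trace (M : Matrix (Fin m) (Fin n) ℝ) : frobSq M = (Mᵀ * M).trace := by
  rw [Matrix.trace, frobSq]
  simp [Matrix.diag, Matrix.mul_apply, sq]
  exact Finset.sum_comm

lemma mul_vmv (M : Matrix (Fin n) (Fin n) ℝ) (a b : Fin n → ℝ) :
    M * vecMulVec a b = vecMulVec (M *ᵥ a) b := by
  ext i j
  simp [Matrix.mul_apply, vecMulVec_apply, Matrix.mulVec, dotProduct,
    Finset.sum_mul, mul_assoc]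

lemma vmv_mul (M : Matrix (Fin n) (Fin n) ℝ) (a b : Fin n → ℝ) :
    vecMulVec a b * M = vecMulVec a (Mᵀ *ᵥ b) := by
  ext i j
  simp [Matrix.mul_apply, vecMulVec_apply, Matrix.mulVec, dotProduct,
    Finset.mul_sum, mul_comm, mul_left_comm]

lemma vmv_mul_vmv (a b c d : Fin n → ℝ) :
    vecMulVec a b * vecMulVec c d = (b ⬝ᵥ c) • vecMulVec a d := by
  ext i j
  simp only [Matrix.mul_apply, vecMulVec_apply, Matrix.smul_apply, dotProduct,
    smul_eq_mul, Finset.sum_mul]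
  apply Finset.sum_congr rfl; intros; ring

lemma trace_vmv (a b : Fin n → ℝ) : (vecMulVec a b).trace = a ⬝ᵥ b := by
  simp [Matrix.trace, Matrix.diag, vecMulVec_apply, dotProduct]

lemma trace_mul_vmv (M : Matrix (Fin n) (Fin n) ℝ) (a b : Fin n → ℝ) :
    (M * vecMulVec a b).trace = b ⬝ᵥ (M *ᵥ a) := by
  simp only [Matrix.trace, Matrix.diag, Matrix.mul_apply, vecMulVec_apply, dotProduct,
    Matrix.mulVec, Finset.mul_sum]
  apply Finset.sum_congr rfl; intros; apply Finset.sum_congr rfl; intros; ring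

lemma transpose_vmv (a b : Fin n → ℝ) : (vecMulVec a b)ᵀ = vecMulVec b a := by
  ext i j; simp [vecMulVec_apply, mul_comm]

lemma trace_eq_rank (P : Matrix (Fin n) (Fin n) ℝ) (h2 : P * P = P) :
    P.trace = (P.rank : ℝ) := by
  have hproj : LinearMap.IsProj (LinearMap.range P.mulVecLin) P.mulVecLin := by
    constructor
    · intro x; exact LinearMap.mem_range_self _ x
    · rintro x ⟨y, rfl⟩
      have := congrArg (·.mulVecLin y) h2
      simpa [Matrix.mulVecLin_mul] using this
  have := hproj.trace
  rw [LinearMap.trace_eq_matrix_trace ℝ (Pi.basisFun ℝ (Fin n)),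
    LinearMap.toMatrix_eq_toMatrix',
    show P.mulVecLin = Matrix.toLin' P from rfl, LinearMap.toMatrix'_toLin'] at this
  rw [this]; rfl

lemma gA_eq (A : Matrix (Fin m) (Fin n) ℝ) (R : Matrix (Fin n) (Fin n) ℝ)
    (hRt : Rᵀ = R) (hR2 : R * R = R) :
    frobSq (A - A * R) = frobSq A - ((Aᵀ * A) * R).trace := by
  rw [frobSq_eq_trace, frobSq_eq_trace]
  have hexp : (A - A * R)ᵀ * (A - A * R)
      = Aᵀ * A - R * (Aᵀ * A) - (Aᵀ * A) * R + R * ((Aᵀ * A) * R) := by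
    rw [Matrix.transpose_sub, Matrix.transpose_mul, hRt, Matrix.sub_mul, Matrix.mul_sub,
      Matrix.mul_sub]
    simp only [Matrix.mul_assoc]
    abel
  rw [hexp, Matrix.trace_add, Matrix.trace_sub, Matrix.trace_sub]
  have h1 : (R * (Aᵀ * A)).trace = ((Aᵀ * A) * R).trace := Matrix.trace_mul_comm _ _
  have h2 : (R * ((Aᵀ * A) * R)).trace = ((Aᵀ * A) * R).trace := by
    rw [Matrix.trace_mul_comm, Matrix.mul_assoc, hR2]
  rw [h1, h2]; ring


lemma dot_self_nonneg (x : Fin n → ℝ) : 0 ≤ x ⬝ᵥ x :=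
  Finset.sum_nonneg fun i _ => mul_self_nonneg (x i)

lemma dot_sym (S : Matrix (Fin n) (Fin n) ℝ) (hS : Sᵀ = S) (x y : Fin n → ℝ) :
    x ⬝ᵥ (S *ᵥ y) = y ⬝ᵥ (S *ᵥ x) := by
  rw [Matrix.dotProduct_mulVec, ← Matrix.mulVec_transpose, hS, dotProduct_comm]

lemma S_psd (A : Matrix (Fin m) (Fin n) ℝ) (x : Fin n → ℝ) :
    0 ≤ x ⬝ᵥ ((Aᵀ * A) *ᵥ x) := by
  rw [← Matrix.mulVec_mulVec, Matrix.dotProduct_mulVec, Matrix.vecMul_transpose]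
  exact dot_self_nonneg _

lemma S_sym (A : Matrix (Fin m) (Fin n) ℝ) : (Aᵀ * A)ᵀ = Aᵀ * A := by
  rw [Matrix.transpose_mul, Matrix.transpose_transpose]

lemma proj_psd (R : Matrix (Fin n) (Fin n) ℝ) (hRt : Rᵀ = R) (hR2 : R * R = R)
    (x : Fin n → ℝ) : 0 ≤ x ⬝ᵥ (R *ᵥ x) := by
  have : x ⬝ᵥ (R *ᵥ x) = (R *ᵥ x) ⬝ᵥ (R *ᵥ x) := by
    conv_lhs => rw [← hR2, ← Matrix.mulVec_mulVec, Matrix.dotProduct_mulVec,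
      ← Matrix.mulVec_transpose, hRt]
  rw [this]; exact dot_self_nonneg _

/-- trace of a product of two psd matrices is nonneg. -/
lemma trace_mul_nonneg (X Z : Matrix (Fin n) (Fin n) ℝ) (hXt : Xᵀ = X)
    (hXp : ∀ x, 0 ≤ x ⬝ᵥ (X *ᵥ x)) (hZp : ∀ x, 0 ≤ x ⬝ᵥ (Z *ᵥ x)) :
    0 ≤ (X * Z).trace := by
  have hpsd : X.PosSemidef := by
    refine Matrix.posSemidef_iff_dotProduct_mulVec.mpr ⟨?_, ?_⟩
    · show Xᴴ = X
      rw [Matrix.conjTranspose_eq_transpose_of_trivial]; exact hXt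
    · intro x
      simpa using hXp x
  obtain ⟨B, hB⟩ : ∃ B : Matrix (Fin n) (Fin n) ℝ, X = Bᴴ * B := by
    open scoped MatrixOrder Matrix.Norms.L2Operator in
    obtain ⟨B, hB⟩ := CStarAlgebra.nonneg_iff_eq_star_mul_self.mp hpsd.nonneg
    exact ⟨B, hB⟩
  rw [hB, Matrix.conjTranspose_eq_transpose_of_trivial, Matrix.mul_assoc,
    Matrix.trace_mul_comm]
  rw [Matrix.trace]
  apply Finset.sum_nonneg
  intro i _
  have : ((B * Z) * Bᵀ).diag i = (B i) ⬝ᵥ (Z *ᵥ (B i)) := by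
    simp [Matrix.diag, Matrix.mul_apply, dotProduct, Matrix.mulVec,
      Matrix.transpose_apply, Finset.sum_mul, Finset.mul_sum]
    rw [Finset.sum_comm]
    apply Finset.sum_congr rfl; intros; apply Finset.sum_congr rfl; intros; ring
  rw [Matrix.mul_assoc] at this ⊢
  rw [this]
  exact hZp _

lemma eq_zero_of_trace_zero (P : Matrix (Fin n) (Fin n) ℝ) (hPt : Pᵀ = P)
    (hP2 : P * P = P) (h : P.trace = 0) : P = 0 := by
  have h1 : ∑ i, ∑ j, (P i j)^2 = 0 := by
    have := frobSq_eq_trace P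
    rw [hPt, hP2, h] at this
    simpa [frobSq] using this
  ext i j
  have h2 : ∀ i ∈ Finset.univ, (0:ℝ) ≤ ∑ j, (P i j)^2 :=
    fun i _ => Finset.sum_nonneg fun j _ => sq_nonneg _
  have h3 := (Finset.sum_eq_zero_iff_of_nonneg h2).mp h1 i (Finset.mem_univ i)
  have h4 := (Finset.sum_eq_zero_iff_of_nonneg (fun j _ => sq_nonneg (P i j))).mp h3 j
    (Finset.mem_univ j)
  simpa using pow_eq_zero_iff (n := 2) (by norm_num) |>.mp h4

set_option maxHeartbeats 2000000 in
lemma localCond {d : ℕ} (A : Matrix (Fin m) (Fin n) ℝ) (P : Matrix (Fin n) (Fin n) ℝ)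
    (hP : IsLocalMinProj d A P) (u v : Fin n → ℝ)
    (hu : P *ᵥ u = u) (hv : P *ᵥ v = 0) (hu1 : u ⬝ᵥ u = 1) (hv1 : v ⬝ᵥ v = 1) :
    u ⬝ᵥ ((Aᵀ * A) *ᵥ v) = 0 ∧ v ⬝ᵥ ((Aᵀ * A) *ᵥ v) ≤ u ⬝ᵥ ((Aᵀ * A) *ᵥ u) := by
  obtain ⟨⟨hPt, hP2, hPrk⟩, ε, hε, hloc⟩ := hP
  set S : Matrix (Fin n) (Fin n) ℝ := Aᵀ * A with hSdef
  have hSt : Sᵀ = S := S_sym A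
  have huv : u ⬝ᵥ v = 0 := by
    have h1 : u ⬝ᵥ (P *ᵥ v) = 0 := by rw [hv, dotProduct_zero]
    rwa [Matrix.dotProduct_mulVec, ← Matrix.mulVec_transpose, hPt, hu] at h1
  have hvu : v ⬝ᵥ u = 0 := by rw [dotProduct_comm]; exact huv
  set b : ℝ := u ⬝ᵥ (S *ᵥ v) with hbdef
  set c : ℝ := v ⬝ᵥ (S *ᵥ v) - u ⬝ᵥ (S *ᵥ u) with hcdef
  have hvSu : v ⬝ᵥ (S *ᵥ u) = b := dot_sym S hSt v u
  have hquad : ∀ t : ℝ, 2 * t ^ 2 < ε → 2 * t * b + t ^ 2 * c ≤ 0 := by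
    intro t ht
    set w : Fin n → ℝ := u + t • v with hwdef
    set k : ℝ := (1 + t ^ 2)⁻¹ with hkdef
    have h1t : (0:ℝ) < 1 + t ^ 2 := by positivity
    have hk : k * (1 + t ^ 2) = 1 := inv_mul_cancel₀ (ne_of_gt h1t)
    have hk1 : (1 + t ^ 2) * k = 1 := by rw [mul_comm]; exact hk
    have hww : w ⬝ᵥ w = 1 + t ^ 2 := by
      simp [hwdef, dotProduct_add, add_dotProduct, dotProduct_smul,
        smul_dotProduct, hu1, hv1, huv, hvu]
      ring
    have hPw : P *ᵥ w = u := by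
      simp [hwdef, Matrix.mulVec_add, Matrix.mulVec_smul, hu, hv]
    have huw : u ⬝ᵥ w = 1 := by
      simp [hwdef, dotProduct_add, dotProduct_smul, hu1, huv]
    have hwu : w ⬝ᵥ u = 1 := by rw [dotProduct_comm]; exact huw
    set W : Matrix (Fin n) (Fin n) ℝ := vecMulVec w w with hWdef
    set U0 : Matrix (Fin n) (Fin n) ℝ := vecMulVec u u with hU0def
    set P0 : Matrix (Fin n) (Fin n) ℝ := P - U0 with hP0def
    set Pt : Matrix (Fin n) (Fin n) ℝ := P0 + k • W with hPtdef
    have hPU0 : P * U0 = U0 := by rw [hU0def, mul_vmv, hu]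
    have hU0P : U0 * P = U0 := by rw [hU0def, vmv_mul, hPt, hu]
    have hU0U0 : U0 * U0 = U0 := by rw [hU0def, vmv_mul_vmv, hu1, one_smul]
    have hPW : P * W = vecMulVec u w := by rw [hWdef, mul_vmv, hPw]
    have hWP : W * P = vecMulVec w u := by rw [hWdef, vmv_mul, hPt, hPw]
    have hU0W : U0 * W = vecMulVec u w := by
      rw [hU0def, hWdef, vmv_mul_vmv, huw, one_smul]
    have hWU0 : W * U0 = vecMulVec w u := by
      rw [hU0def, hWdef, vmv_mul_vmv, hwu, one_smul]
    have hWW : W * W = (1 + t ^ 2) • W := by rw [hWdef, vmv_mul_vmv, hww]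
    have hP0P0 : P0 * P0 = P0 := by
      rw [hP0def, Matrix.sub_mul, Matrix.mul_sub, Matrix.mul_sub, hP2, hPU0, hU0P, hU0U0]
      abel
    have hP0W : P0 * W = 0 := by
      rw [hP0def, Matrix.sub_mul, hPW, hU0W, sub_self]
    have hWP0 : W * P0 = 0 := by
      rw [hP0def, Matrix.mul_sub, hWP, hWU0, sub_self]
    have hPt2 : Pt * Pt = Pt := by
      rw [hPtdef, Matrix.add_mul, Matrix.mul_add, Matrix.mul_add, hP0P0,
        Matrix.mul_smul, hP0W, Matrix.smul_mul, hWP0, Matrix.mul_smul, Matrix.smul_mul, hWW]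
      simp only [smul_zero, add_zero, smul_smul, zero_add]
      rw [hk, mul_one]
    have hPtt : Ptᵀ = Pt := by
      rw [hPtdef, hP0def, Matrix.transpose_add, Matrix.transpose_sub,
        Matrix.transpose_smul, hPt, hU0def, hWdef, transpose_vmv, transpose_vmv]
    have htrPt : Pt.trace = P.trace := by
      rw [hPtdef, hP0def, Matrix.trace_add, Matrix.trace_sub, Matrix.trace_smul,
        hU0def, hWdef, trace_vmv, trace_vmv, hu1, hww]
      simp only [smul_eq_mul, hk]
      ring
    have hrankPt : Pt.rank = d := by
      have e1 : ((Pt.rank : ℕ) : ℝ) = ((P.rank : ℕ) : ℝ) := by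
        rw [← trace_eq_rank _ hPt2, ← trace_eq_rank _ hP2, htrPt]
      have := Nat.cast_inj.mp e1
      rw [this, hPrk]
    have hproj : IsProjOfRank d Pt := ⟨hPtt, hPt2, hrankPt⟩
    have hdiff : Pt - P = k • W - U0 := by
      rw [hPtdef, hP0def]; abel
    have hfrob : frobSq (Pt - P) < ε := by
      have hsym : (k • W - U0)ᵀ = k • W - U0 := by
        rw [Matrix.transpose_sub, Matrix.transpose_smul, hWdef, hU0def,
          transpose_vmv, transpose_vmv]
      have hval : frobSq (Pt - P) = 2 - 2 * k := by
        rw [hdiff, frobSq_eq_trace, hsym, Matrix.sub_mul, Matrix.mul_sub, Matrix.mul_sub]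
        simp only [Matrix.mul_smul, Matrix.smul_mul]
        rw [hWW, hWU0, hU0W, hU0U0]
        simp only [Matrix.trace_sub, Matrix.trace_smul, smul_smul, smul_eq_mul,
          hWdef, hU0def, trace_vmv, hww, hwu, huw, hu1]
        have hkk : k * (k * (1 + t ^ 2)) * (1 + t ^ 2) = 1 := by
          rw [hk, mul_one, hk]
        nlinarith [hkk, hk, hk1]
      rw [hval]
      have hk' : 1 - k ≤ t ^ 2 := by
        have h' : (1 - k) * (1 + t ^ 2) = t ^ 2 := by
          rw [sub_mul, one_mul, hk]; ring
        nlinarith [h', sq_nonneg t, h1t]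
      linarith
    have hineq := hloc Pt hproj hfrob
    rw [gA_eq A P hPt hP2, gA_eq A Pt hPtt hPt2] at hineq
    have htr : (S * Pt).trace ≤ (S * P).trace := by
      rw [hSdef]; linarith
    have hSPt : (S * Pt).trace
        = (S * P).trace - u ⬝ᵥ (S *ᵥ u) + k * (w ⬝ᵥ (S *ᵥ w)) := by
      rw [hPtdef, hP0def, Matrix.mul_add, Matrix.mul_sub, Matrix.mul_smul,
        Matrix.trace_add, Matrix.trace_sub, Matrix.trace_smul,
        hU0def, hWdef, trace_mul_vmv, trace_mul_vmv]
      simp only [smul_eq_mul]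
    have hwSw : w ⬝ᵥ (S *ᵥ w) = u ⬝ᵥ (S *ᵥ u) + 2 * t * b + t ^ 2 * (v ⬝ᵥ (S *ᵥ v)) := by
      simp [hwdef, Matrix.mulVec_add, Matrix.mulVec_smul, dotProduct_add,
        add_dotProduct, dotProduct_smul, smul_dotProduct, hvSu, ← hbdef]
      ring
    rw [hSPt, hwSw] at htr
    have hmul : k * (u ⬝ᵥ (S *ᵥ u) + 2 * t * b + t ^ 2 * (v ⬝ᵥ (S *ᵥ v)))
        ≤ u ⬝ᵥ (S *ᵥ u) := by linarith
    have h5 := mul_le_mul_of_nonneg_left hmul (le_of_lt h1t)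
    rw [← mul_assoc, hk1, one_mul] at h5
    rw [hcdef]
    ring_nf at h5 ⊢
    linarith [h5]
  constructor
  · by_contra hb0
    have habs : 0 < |b| := abs_pos.mpr hb0
    set s : ℝ := min (|b| / (|c| + 1)) (Real.sqrt ε / 2) with hsdef
    have habsc : (0:ℝ) < |c| + 1 := by positivity
    have hspos : 0 < s := lt_min (by positivity) (by positivity)
    have hs1 : s ≤ |b| / (|c| + 1) := min_le_left _ _
    have hs2 : s ≤ Real.sqrt ε / 2 := min_le_right _ _
    have hsε : 2 * s ^ 2 < ε := by
      have h1 : s ^ 2 ≤ (Real.sqrt ε / 2) ^ 2 := by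
        apply pow_le_pow_left₀ (le_of_lt hspos) hs2
      have h2 : (Real.sqrt ε / 2) ^ 2 = ε / 4 := by
        rw [div_pow, Real.sq_sqrt (le_of_lt hε)]; norm_num
      nlinarith
    have h1 := hquad s hsε
    have h2 := hquad (-s) (by rw [neg_sq]; exact hsε)
    have hsc : s * (|c| + 1) ≤ |b| := by
      rw [div_eq_mul_inv] at hs1
      calc s * (|c| + 1) ≤ (|b| * (|c| + 1)⁻¹) * (|c| + 1) := by
            apply mul_le_mul_of_nonneg_right hs1 (le_of_lt habsc)
        _ = |b| := by field_simp
    have hscb : s * |c| ≤ |b| - s := by nlinarith [hsc]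
    rcases le_or_gt 0 b with hbpos | hbneg
    · have hb' : |b| = b := abs_of_nonneg hbpos
      rw [hb'] at hscb habs
      nlinarith [h1, hscb, hspos, habs, neg_abs_le c, sq_nonneg s, abs_nonneg c,
        mul_pos hspos habs]
    · have hb' : |b| = -b := abs_of_neg hbneg
      rw [hb'] at hscb habs
      nlinarith [h2, hscb, hspos, habs, neg_abs_le c, sq_nonneg s, abs_nonneg c,
        mul_pos hspos habs]
  · set t0 : ℝ := Real.sqrt ε / 2 with ht0def
    have ht0pos : 0 < t0 := by positivity
    have ht0ε : 2 * t0 ^ 2 < ε := by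
      have : t0 ^ 2 = ε / 4 := by
        rw [ht0def, div_pow, Real.sq_sqrt (le_of_lt hε)]; norm_num
      nlinarith
    have h1 := hquad t0 ht0ε
    have h2 := hquad (-t0) (by rw [neg_sq]; exact ht0ε)
    nlinarith [h1, h2, ht0pos, hcdef, mul_pos ht0pos ht0pos]

lemma smul_unit (y : Fin n → ℝ) (hy : y ≠ 0) :
    ∃ c : ℝ, 0 < c ∧ (c * (c * (y ⬝ᵥ y))) = 1 := by
  have hxx : 0 < y ⬝ᵥ y := by
    rcases (dot_self_nonneg y).lt_or_eq with h | h
    · exact h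
    · exact absurd (dotProduct_self_eq_zero.mp h.symm) hy
  refine ⟨(Real.sqrt (y ⬝ᵥ y))⁻¹, by positivity, ?_⟩
  have hs : Real.sqrt (y ⬝ᵥ y) * Real.sqrt (y ⬝ᵥ y) = y ⬝ᵥ y :=
    Real.mul_self_sqrt hxx.le
  have hsne : Real.sqrt (y ⬝ᵥ y) ≠ 0 := by positivity
  field_simp
  rw [Real.sq_sqrt hxx.le]

lemma dot_smul_mulVec (S : Matrix (Fin n) (Fin n) ℝ) (c e : ℝ) (x y : Fin n → ℝ) :
    (c • x) ⬝ᵥ (S *ᵥ (e • y)) = c * (e * (x ⬝ᵥ (S *ᵥ y))) := by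
  rw [smul_dotProduct, Matrix.mulVec_smul, dotProduct_smul]
  simp [smul_eq_mul]

set_option maxHeartbeats 1000000 in
lemma key {d : ℕ} (A : Matrix (Fin m) (Fin n) ℝ) (P : Matrix (Fin n) (Fin n) ℝ)
    (hP : IsLocalMinProj d A P) (R : Matrix (Fin n) (Fin n) ℝ) (hR : IsProjOfRank d R) :
    ((Aᵀ * A) * R).trace ≤ ((Aᵀ * A) * P).trace := by
  obtain ⟨hRt, hR2, hRrk⟩ := hR
  obtain ⟨⟨hPt, hP2, hPrk⟩, -⟩ := id hP
  set S : Matrix (Fin n) (Fin n) ℝ := Aᵀ * A with hSdef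
  have hSt : Sᵀ = S := S_sym A
  have htrP : P.trace = (d : ℝ) := by rw [trace_eq_rank P hP2, hPrk]
  have htrR : R.trace = (d : ℝ) := by rw [trace_eq_rank R hR2, hRrk]
  rcases Nat.eq_zero_or_pos d with hd | hd
  · subst hd
    have hP0 : P = 0 := eq_zero_of_trace_zero P hPt hP2 (by rw [htrP]; simp)
    have hR0 : R = 0 := eq_zero_of_trace_zero R hRt hR2 (by rw [htrR]; simp)
    rw [hP0, hR0]
  -- d ≥ 1 : find a unit vector in the range of P
  have hPne : P ≠ 0 := by
    intro h
    rw [h, Matrix.rank_zero] at hPrk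
    omega
  have hent : ∃ i j, P i j ≠ 0 := by
    by_contra h
    push_neg at h
    exact hPne (by ext i j; simpa using h i j)
  obtain ⟨i0, j0, hij⟩ := hent
  set y0 : Fin n → ℝ := fun k => P k j0 with hy0def
  have hy0ne : y0 ≠ 0 := by
    intro h
    exact hij (by have := congrFun h i0; simpa [hy0def] using this)
  have hPy0 : P *ᵥ y0 = y0 := by
    ext k
    have : (P * P) k j0 = P k j0 := by rw [hP2]
    simpa [Matrix.mulVec, dotProduct, Matrix.mul_apply, hy0def] using this
  obtain ⟨c0, hc0pos, hc0⟩ := smul_unit y0 hy0ne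
  have hu0fix : P *ᵥ (c0 • y0) = c0 • y0 := by rw [Matrix.mulVec_smul, hPy0]
  have hu0unit : (c0 • y0) ⬝ᵥ (c0 • y0) = 1 := by
    rw [smul_dotProduct, dotProduct_smul]
    simpa [smul_eq_mul, mul_assoc] using hc0
  set E : Set ℝ := {r | ∃ u, P *ᵥ u = u ∧ u ⬝ᵥ u = 1 ∧ r = u ⬝ᵥ (S *ᵥ u)} with hEdef
  have hne : E.Nonempty := ⟨_, c0 • y0, hu0fix, hu0unit, rfl⟩
  have hbdd : BddBelow E := ⟨0, by rintro r ⟨u, -, -, rfl⟩; exact S_psd A u⟩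
  set α : ℝ := sInf E with hαdef
  -- scaled first/second order conditions
  have h_lb : ∀ y, P *ᵥ y = y → α * (y ⬝ᵥ y) ≤ y ⬝ᵥ (S *ᵥ y) := by
    intro y hy
    rcases eq_or_ne y 0 with rfl | hyne
    · simp
    obtain ⟨c, hcpos, hc⟩ := smul_unit y hyne
    have hmem : (c • y) ⬝ᵥ (S *ᵥ (c • y)) ∈ E := by
      refine ⟨c • y, by rw [Matrix.mulVec_smul, hy], ?_, rfl⟩
      rw [smul_dotProduct, dotProduct_smul]
      simpa [smul_eq_mul, mul_assoc] using hc
    have hα := csInf_le hbdd hmem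
    rw [dot_smul_mulVec] at hα
    have h1 := mul_le_mul_of_nonneg_right hα (dot_self_nonneg y)
    have heq : c * (c * (y ⬝ᵥ (S *ᵥ y))) * (y ⬝ᵥ y)
        = (c * (c * (y ⬝ᵥ y))) * (y ⬝ᵥ (S *ᵥ y)) := by ring
    rwa [heq, hc, one_mul] at h1
  have h_ub : ∀ y, P *ᵥ y = 0 → y ⬝ᵥ (S *ᵥ y) ≤ α * (y ⬝ᵥ y) := by
    intro y hy
    rcases eq_or_ne y 0 with rfl | hyne
    · simp
    obtain ⟨c, hcpos, hc⟩ := smul_unit y hyne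
    have hv1 : (c • y) ⬝ᵥ (c • y) = 1 := by
      rw [smul_dotProduct, dotProduct_smul]
      simpa [smul_eq_mul, mul_assoc] using hc
    have hvfix : P *ᵥ (c • y) = 0 := by rw [Matrix.mulVec_smul, hy, smul_zero]
    have hle : ∀ r ∈ E, (c • y) ⬝ᵥ (S *ᵥ (c • y)) ≤ r := by
      rintro r ⟨u, huf, hu1, rfl⟩
      exact (localCond A P hP u (c • y) huf hvfix hu1 hv1).2
    have hα := le_csInf hne hle
    rw [dot_smul_mulVec] at hα
    have h1 := mul_le_mul_of_nonneg_right hα (dot_self_nonneg y)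
    have heq : c * (c * (y ⬝ᵥ (S *ᵥ y))) * (y ⬝ᵥ y)
        = (c * (c * (y ⬝ᵥ y))) * (y ⬝ᵥ (S *ᵥ y)) := by ring
    rwa [heq, hc, one_mul] at h1
  have h_cr : ∀ x y, P *ᵥ x = x → P *ᵥ y = 0 → x ⬝ᵥ (S *ᵥ y) = 0 := by
    intro x y hx hy
    rcases eq_or_ne x 0 with rfl | hxne
    · simp
    rcases eq_or_ne y 0 with rfl | hyne
    · simp
    obtain ⟨cx, hcxpos, hcx⟩ := smul_unit x hxne
    obtain ⟨cy, hcypos, hcy⟩ := smul_unit y hyne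
    have hx1 : (cx • x) ⬝ᵥ (cx • x) = 1 := by
      rw [smul_dotProduct, dotProduct_smul]
      simpa [smul_eq_mul, mul_assoc] using hcx
    have hy1 : (cy • y) ⬝ᵥ (cy • y) = 1 := by
      rw [smul_dotProduct, dotProduct_smul]
      simpa [smul_eq_mul, mul_assoc] using hcy
    have hxf : P *ᵥ (cx • x) = cx • x := by rw [Matrix.mulVec_smul, hx]
    have hyf : P *ᵥ (cy • y) = 0 := by rw [Matrix.mulVec_smul, hy, smul_zero]
    have h0 := (localCond A P hP (cx • x) (cy • y) hxf hyf hx1 hy1).1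
    rw [dot_smul_mulVec] at h0
    rcases mul_eq_zero.mp h0 with h | h
    · exact absurd h (ne_of_gt hcxpos)
    rcases mul_eq_zero.mp h with h | h
    · exact absurd h (ne_of_gt hcypos)
    exact h
  -- the shifted matrix T
  set T : Matrix (Fin n) (Fin n) ℝ := S - α • (1 : Matrix (Fin n) (Fin n) ℝ) with hTdef
  have hTt : Tᵀ = T := by
    rw [hTdef, Matrix.transpose_sub, hSt, Matrix.transpose_smul, Matrix.transpose_one]
  have hsymP : ∀ p q, P p q = P q p := by
    intro p q
    conv_lhs => rw [← hPt]
    exact Matrix.transpose_apply P p q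
  have hP1P : P * (1 - P) = 0 := by rw [Matrix.mul_sub, Matrix.mul_one, hP2, sub_self]
  have h1PP : (1 - P) * P = 0 := by rw [Matrix.sub_mul, Matrix.one_mul, hP2, sub_self]
  have h1Pt : (1 - P : Matrix (Fin n) (Fin n) ℝ)ᵀ = 1 - P := by
    rw [Matrix.transpose_sub, Matrix.transpose_one, hPt]
  have h1P2 : (1 - P) * (1 - P) = (1 - P) := by
    rw [Matrix.mul_sub, Matrix.mul_one, Matrix.sub_mul, Matrix.one_mul, hP2]
    abel
  -- T maps range P to range P
  have hdotT : ∀ x y, P *ᵥ x = x → P *ᵥ y = 0 → x ⬝ᵥ (T *ᵥ y) = 0 := by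
    intro x y hx hy
    have hxy : x ⬝ᵥ y = 0 := by
      rw [← hx, dotProduct_comm, Matrix.dotProduct_mulVec]
      conv_lhs => rw [← hPt]
      rw [Matrix.vecMul_transpose, hy, zero_dotProduct]
    rw [hTdef, Matrix.sub_mulVec, dotProduct_sub, h_cr x y hx hy,
      Matrix.smul_mulVec, Matrix.one_mulVec, dotProduct_smul,
      smul_eq_mul, hxy]
    ring
  have hPTQ : P * T * (1 - P) = 0 := by
    ext i j
    set a : Fin n → ℝ := fun k => P k i with hadef
    set bb : Fin n → ℝ := fun l => (1 - P) l j with hbbdef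
    have hPa : P *ᵥ a = a := by
      ext k
      have : (P * P) k i = P k i := by rw [hP2]
      simpa [Matrix.mulVec, dotProduct, Matrix.mul_apply, hadef] using this
    have hPb : P *ᵥ bb = 0 := by
      ext k
      have : (P * (1 - P)) k j = 0 := by rw [hP1P]; rfl
      simpa [Matrix.mulVec, dotProduct, Matrix.mul_apply, hbbdef] using this
    have hentry : (P * T * (1 - P)) i j = a ⬝ᵥ (T *ᵥ bb) := by
      simp only [Matrix.mul_apply, dotProduct, Matrix.mulVec, hadef, hbbdef,
        Finset.sum_mul, Finset.mul_sum]
      rw [Finset.sum_comm]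
      apply Finset.sum_congr rfl; intros k _
      apply Finset.sum_congr rfl; intros l _
      rw [hsymP k i]; ring
    rw [hentry, hdotT a bb hPa hPb]
    rfl
  have hQTP : (1 - P) * T * P = 0 := by
    have h := congrArg Matrix.transpose hPTQ
    rw [Matrix.transpose_mul, Matrix.transpose_mul, h1Pt, hTt, hPt,
      Matrix.transpose_zero] at h
    rw [Matrix.mul_assoc]
    exact h
  have hdecomp : T = P * T * P + (1 - P) * T * (1 - P) := by
    have e1 : (P + (1 - P)) * T * (P + (1 - P)) = T := by simp
    have e2 : (P + (1 - P)) * T * (P + (1 - P))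
        = P * T * P + P * T * (1 - P) + ((1 - P) * T * P + (1 - P) * T * (1 - P)) := by
      rw [Matrix.add_mul, Matrix.add_mul, Matrix.mul_add, Matrix.mul_add]
    have e3 := e2.symm.trans e1
    rw [hPTQ, hQTP, add_zero, zero_add] at e3
    exact e3.symm
  -- psd properties of blocks
  set X : Matrix (Fin n) (Fin n) ℝ := P * T * P with hXdef
  set Y : Matrix (Fin n) (Fin n) ℝ := (1 - P) * T * (1 - P) with hYdef
  have hXt : Xᵀ = X := by
    rw [hXdef, Matrix.transpose_mul, Matrix.transpose_mul, hPt, hTt, Matrix.mul_assoc]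
  have hYt : Yᵀ = Y := by
    rw [hYdef, Matrix.transpose_mul, Matrix.transpose_mul, h1Pt, hTt, Matrix.mul_assoc]
  have hdotP : ∀ (M : Matrix (Fin n) (Fin n) ℝ) (x : Fin n → ℝ), Mᵀ = M →
      ∀ z, x ⬝ᵥ (M *ᵥ z) = (M *ᵥ x) ⬝ᵥ z := by
    intro M x hM z
    rw [Matrix.dotProduct_mulVec, ← Matrix.mulVec_transpose, hM]
  have hXp : ∀ x, 0 ≤ x ⬝ᵥ (X *ᵥ x) := by
    intro x
    have hXv : X *ᵥ x = P *ᵥ (T *ᵥ (P *ᵥ x)) := by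
      rw [hXdef, ← Matrix.mulVec_mulVec, ← Matrix.mulVec_mulVec]
    have hPy : P *ᵥ (P *ᵥ x) = P *ᵥ x := by rw [Matrix.mulVec_mulVec, hP2]
    rw [hXv, hdotP P x hPt]
    set y := P *ᵥ x
    have h1 : y ⬝ᵥ (T *ᵥ y) = y ⬝ᵥ (S *ᵥ y) - α * (y ⬝ᵥ y) := by
      rw [hTdef, Matrix.sub_mulVec, dotProduct_sub, Matrix.smul_mulVec,
        Matrix.one_mulVec, dotProduct_smul, smul_eq_mul]
    rw [h1]
    have := h_lb y hPy
    linarith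
  have hYp : ∀ x, 0 ≤ x ⬝ᵥ ((-Y) *ᵥ x) := by
    intro x
    have hYv : Y *ᵥ x = (1 - P) *ᵥ (T *ᵥ ((1 - P) *ᵥ x)) := by
      rw [hYdef, ← Matrix.mulVec_mulVec, ← Matrix.mulVec_mulVec]
    have hPy : P *ᵥ ((1 - P) *ᵥ x) = 0 := by
      rw [Matrix.mulVec_mulVec, hP1P, Matrix.zero_mulVec]
    have : x ⬝ᵥ (Y *ᵥ x) ≤ 0 := by
      rw [hYv, hdotP (1 - P) x h1Pt]
      set y := (1 - P) *ᵥ x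
      have h1 : y ⬝ᵥ (T *ᵥ y) = y ⬝ᵥ (S *ᵥ y) - α * (y ⬝ᵥ y) := by
        rw [hTdef, Matrix.sub_mulVec, dotProduct_sub, Matrix.smul_mulVec,
          Matrix.one_mulVec, dotProduct_smul, smul_eq_mul]
      rw [h1]
      have := h_ub y hPy
      linarith
    rw [Matrix.neg_mulVec, dotProduct_neg]
    linarith
  -- trace inequalities
  have hXR : (X * R).trace ≤ X.trace := by
    have h0 := trace_mul_nonneg X (1 - R) hXt hXp (proj_psd (1 - R) (by
      rw [Matrix.transpose_sub, Matrix.transpose_one, hRt]) (by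
      rw [Matrix.mul_sub, Matrix.mul_one, Matrix.sub_mul, Matrix.one_mul, hR2]; abel))
    rw [Matrix.mul_sub, Matrix.mul_one, Matrix.trace_sub] at h0
    linarith
  have hXP : (X * P).trace = X.trace := by
    rw [hXdef]
    have : P * T * P * P = P * T * P := by
      rw [Matrix.mul_assoc (P * T), hP2]
    rw [this]
  have hYR : (Y * R).trace ≤ 0 := by
    have h0 := trace_mul_nonneg (-Y) R (by rw [Matrix.transpose_neg, hYt]) hYp
      (proj_psd R hRt hR2)
    rw [Matrix.neg_mul, Matrix.trace_neg] at h0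
    linarith
  have hYP : (Y * P).trace = 0 := by
    rw [hYdef]
    have : (1 - P) * T * (1 - P) * P = 0 := by
      rw [Matrix.mul_assoc ((1 - P) * T), h1PP, Matrix.mul_zero]
    rw [this, Matrix.trace_zero]
  have hTRP : (T * (R - P)).trace ≤ 0 := by
    have hsplit : T * (R - P) = X * (R - P) + Y * (R - P) := by
      conv_lhs => rw [hdecomp]
      rw [Matrix.add_mul]
    rw [hsplit, Matrix.trace_add, Matrix.mul_sub, Matrix.mul_sub,
      Matrix.trace_sub, Matrix.trace_sub, hXP, hYP]
    linarith
  have htr0 : (R - P).trace = 0 := by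
    rw [Matrix.trace_sub, htrP, htrR, sub_self]
  have hfin : (T * (R - P)).trace = (S * (R - P)).trace - α * (R - P).trace := by
    rw [hTdef, Matrix.sub_mul, Matrix.smul_mul, Matrix.one_mul, Matrix.trace_sub,
      Matrix.trace_smul, smul_eq_mul]
  rw [hfin, htr0, mul_zero, sub_zero] at hTRP
  rw [Matrix.mul_sub, Matrix.trace_sub] at hTRP
  linarith

end GAhelper

/-- Every local minimum of `g_A` is a global minimum; in particular `g_A`
takes the same value at all of its local minima. -/
theorem gA_local_min_is_global {m n d : ℕ} (A : Matrix (Fin m) (Fin n) ℝ)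
    (P Q : Matrix (Fin n) (Fin n) ℝ)
    (hP : IsLocalMinProj d A P) (hQ : IsLocalMinProj d A Q) :
    frobSq (A - A * P) = frobSq (A - A * Q) ∧
    ∀ R : Matrix (Fin n) (Fin n) ℝ, IsProjOfRank d R →
      frobSq (A - A * P) ≤ frobSq (A - A * R) := by
  obtain ⟨⟨hPt, hP2, hPrk⟩, -⟩ := id hP
  obtain ⟨⟨hQt, hQ2, hQrk⟩, -⟩ := id hQ
  have h1 := GAhelper.key A P hP Q ⟨hQt, hQ2, hQrk⟩
  have h2 := GAhelper.key A Q hQ P ⟨hPt, hP2, hPrk⟩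
  constructor
  · rw [GAhelper.gA_eq A P hPt hP2, GAhelper.gA_eq A Q hQt hQ2]
    have h3 : ((Aᵀ * A) * P).trace = ((Aᵀ * A) * Q).trace := le_antisymm h2 h1
    rw [h3]
  · intro R hR
    obtain ⟨hRt, hR2, hRrk⟩ := id hR
    have h3 := GAhelper.key A P hP R hR
    rw [GAhelper.gA_eq A P hPt hP2, GAhelper.gA_eq A R hRt hR2]
    linarith
end

section
/- Let v₁ be a unit eigenvector of AᵀA with top eigenvalue λ₁. Let z₁, z₂ be orthonormal vectors with v₁ = √(1−a²) z₁ + a z₂ for some a ∈ (0,1), and suppose ‖A z₁‖² < λ₁. Then for w = √(1−ε²) z₁ + ε z₂, ‖A w‖² = ‖A z₁‖² + (λ₁ − ‖A z₁‖²)(2ε√((1−ε²)(1−a²))/a + 2ε² − ε²/a²); in particular ‖A w‖² > ‖A z₁‖² for all sufficiently small ε > 0. -/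
open Matrix BigOperators

private lemma sum_mul_expand {n : ℕ} (x u v : Fin n → ℝ) (c d : ℝ) :
    ∑ i, x i * (c * u i + d * v i)
      = c * (∑ i, x i * u i) + d * (∑ i, x i * v i) := by
  rw [Finset.mul_sum, Finset.mul_sum, ← Finset.sum_add_distrib]
  exact Finset.sum_congr rfl fun i _ => by ring

private lemma quad_sum {m : ℕ} (u v : Fin m → ℝ) (c d : ℝ) :
    ∑ j, (c * u j + d * v j) ^ 2
      = c ^ 2 * (∑ j, (u j) ^ 2) + 2 * c * d * (∑ j, u j * v j)
        + d ^ 2 * (∑ j, (v j) ^ 2) := by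
  rw [Finset.mul_sum, Finset.mul_sum, Finset.mul_sum, ← Finset.sum_add_distrib,
    ← Finset.sum_add_distrib]
  exact Finset.sum_congr rfl fun j _ => by ring

set_option maxHeartbeats 1000000 in
/-- Rotating `z₁` towards `z₂` (in the plane containing the top eigenvector
`v₁ = √(1−a²) z₁ + a z₂`) increases `‖Az₁‖²` for small `ε`. -/
theorem rotate_towards_eigenvector {m n : ℕ}
    (A : Matrix (Fin m) (Fin n) ℝ) (v₁ z₁ z₂ : Fin n → ℝ) (lam a : ℝ)
    (heig : (Aᵀ * A).mulVec v₁ = lam • v₁)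
    (htop : ∀ (v : Fin n → ℝ) (c : ℝ), v ≠ 0 → (Aᵀ * A).mulVec v = c • v → c ≤ lam)
    (hv₁ : ∑ i, (v₁ i) ^ 2 = 1)
    (hz₁ : ∑ i, (z₁ i) ^ 2 = 1) (hz₂ : ∑ i, (z₂ i) ^ 2 = 1)
    (hzorth : ∑ i, z₁ i * z₂ i = 0)
    (ha0 : 0 < a) (ha1 : a < 1)
    (hv₁eq : v₁ = Real.sqrt (1 - a ^ 2) • z₁ + a • z₂)
    (hlt : ∑ j, (A.mulVec z₁ j) ^ 2 < lam) :
    (∀ ε : ℝ, 0 < ε → ε < 1 →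
      ∑ j, (A.mulVec (Real.sqrt (1 - ε ^ 2) • z₁ + ε • z₂) j) ^ 2
        = (∑ j, (A.mulVec z₁ j) ^ 2) +
          (lam - ∑ j, (A.mulVec z₁ j) ^ 2) *
            (2 * ε * Real.sqrt ((1 - ε ^ 2) * (1 - a ^ 2)) / a
              + 2 * ε ^ 2 - ε ^ 2 / a ^ 2)) ∧
    (∃ ε₀ > (0 : ℝ), ∀ ε : ℝ, 0 < ε → ε < ε₀ →
      (∑ j, (A.mulVec z₁ j) ^ 2) <
        ∑ j, (A.mulVec (Real.sqrt (1 - ε ^ 2) • z₁ + ε • z₂) j) ^ 2) := by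
  have ha2 : (0:ℝ) < 1 - a ^ 2 := by nlinarith
  set s : ℝ := Real.sqrt (1 - a ^ 2) with hs_def
  have hs0 : 0 < s := Real.sqrt_pos.mpr ha2
  have hs2 : s ^ 2 = 1 - a ^ 2 := Real.sq_sqrt ha2.le
  set α := ∑ j, (A.mulVec z₁ j) ^ 2 with hα_def
  set β := ∑ j, A.mulVec z₁ j * A.mulVec z₂ j with hβ_def
  set γ := ∑ j, (A.mulVec z₂ j) ^ 2 with hγ_def
  -- basic dot product identity
  have hdot : ∀ x y : Fin n → ℝ,
      ∑ i, x i * ((Aᵀ * A).mulVec y) i = ∑ j, A.mulVec x j * A.mulVec y j := by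
    intro x y
    have h : x ⬝ᵥ ((Aᵀ * A) *ᵥ y) = (A *ᵥ x) ⬝ᵥ (A *ᵥ y) := by
      rw [← Matrix.mulVec_mulVec, Matrix.dotProduct_mulVec, Matrix.vecMul_transpose]
    simpa [dotProduct] using h
  have hz₁' : ∑ i, z₁ i * z₁ i = 1 := by simpa [sq] using hz₁
  have hz₂' : ∑ i, z₂ i * z₂ i = 1 := by simpa [sq] using hz₂
  have hzorth' : ∑ i, z₂ i * z₁ i = 0 := by
    rw [← hzorth]; exact Finset.sum_congr rfl fun i _ => mul_comm _ _
  have hv₁pt : ∀ i, v₁ i = s * z₁ i + a * z₂ i := by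
    intro i; rw [hv₁eq]; simp
  have hAv : ∀ j, A.mulVec v₁ j = s * A.mulVec z₁ j + a * A.mulVec z₂ j := by
    intro j
    rw [hv₁eq, Matrix.mulVec_add, Matrix.mulVec_smul, Matrix.mulVec_smul]
    simp
  have hz1v : ∑ i, z₁ i * v₁ i = s := by
    calc ∑ i, z₁ i * v₁ i = ∑ i, z₁ i * (s * z₁ i + a * z₂ i) :=
          Finset.sum_congr rfl fun i _ => by rw [hv₁pt i]
      _ = s * (∑ i, z₁ i * z₁ i) + a * (∑ i, z₁ i * z₂ i) := sum_mul_expand _ _ _ _ _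
      _ = s := by rw [hz₁', hzorth]; ring
  have hz2v : ∑ i, z₂ i * v₁ i = a := by
    calc ∑ i, z₂ i * v₁ i = ∑ i, z₂ i * (s * z₁ i + a * z₂ i) :=
          Finset.sum_congr rfl fun i _ => by rw [hv₁pt i]
      _ = s * (∑ i, z₂ i * z₁ i) + a * (∑ i, z₂ i * z₂ i) := sum_mul_expand _ _ _ _ _
      _ = a := by rw [hz₂', hzorth']; ring
  -- eigen-equations projected on z₁ and z₂
  have e1 : s * α + a * β = lam * s := by
    have h1 : ∑ i, z₁ i * ((Aᵀ * A).mulVec v₁) i = lam * s := by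
      rw [heig]
      calc ∑ i, z₁ i * (lam • v₁) i = lam * ∑ i, z₁ i * v₁ i := by
            rw [Finset.mul_sum]; exact Finset.sum_congr rfl fun i _ => by simp; ring
        _ = lam * s := by rw [hz1v]
    rw [hdot z₁ v₁] at h1
    calc s * α + a * β
        = ∑ j, A.mulVec z₁ j * (s * A.mulVec z₁ j + a * A.mulVec z₂ j) := by
          rw [sum_mul_expand]
          congr 1
          · congr 1; exact Finset.sum_congr rfl fun j _ => (pow_two _)
      _ = ∑ j, A.mulVec z₁ j * A.mulVec v₁ j :=
          Finset.sum_congr rfl fun j _ => by rw [hAv j]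
      _ = lam * s := h1
  have e2 : s * β + a * γ = lam * a := by
    have h1 : ∑ i, z₂ i * ((Aᵀ * A).mulVec v₁) i = lam * a := by
      rw [heig]
      calc ∑ i, z₂ i * (lam • v₁) i = lam * ∑ i, z₂ i * v₁ i := by
            rw [Finset.mul_sum]; exact Finset.sum_congr rfl fun i _ => by simp; ring
        _ = lam * a := by rw [hz2v]
    rw [hdot z₂ v₁] at h1
    have hβcomm : ∑ j, A.mulVec z₂ j * A.mulVec z₁ j = β := by
      rw [hβ_def]; exact Finset.sum_congr rfl fun j _ => mul_comm _ _
    calc s * β + a * γ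
        = ∑ j, A.mulVec z₂ j * (s * A.mulVec z₁ j + a * A.mulVec z₂ j) := by
          rw [sum_mul_expand, hβcomm]
          congr 1
          congr 1; exact Finset.sum_congr rfl fun j _ => (pow_two _)
      _ = ∑ j, A.mulVec z₂ j * A.mulVec v₁ j :=
          Finset.sum_congr rfl fun j _ => by rw [hAv j]
      _ = lam * a := h1
  have hane : a ≠ 0 := ne_of_gt ha0
  have hβval : β = s * (lam - α) / a := by
    field_simp
    linarith [e1]
  have hγval : γ = lam - (1 - a ^ 2) * (lam - α) / a ^ 2 := by
    rw [hβval] at e2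
    field_simp at e2 ⊢
    nlinarith [e2, hs2]
  -- Part 1
  have part1 : ∀ ε : ℝ, 0 < ε → ε < 1 →
      ∑ j, (A.mulVec (Real.sqrt (1 - ε ^ 2) • z₁ + ε • z₂) j) ^ 2
        = α + (lam - α) *
            (2 * ε * Real.sqrt ((1 - ε ^ 2) * (1 - a ^ 2)) / a
              + 2 * ε ^ 2 - ε ^ 2 / a ^ 2) := by
    intro ε hε0 hε1
    have hε2 : (0:ℝ) ≤ 1 - ε ^ 2 := by nlinarith
    set t : ℝ := Real.sqrt (1 - ε ^ 2) with ht_def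
    have ht2 : t ^ 2 = 1 - ε ^ 2 := Real.sq_sqrt hε2
    have hsqrtprod : Real.sqrt ((1 - ε ^ 2) * (1 - a ^ 2)) = t * s := by
      rw [Real.sqrt_mul hε2]
    have hAw : ∀ j, A.mulVec (t • z₁ + ε • z₂) j
        = t * A.mulVec z₁ j + ε * A.mulVec z₂ j := by
      intro j
      rw [Matrix.mulVec_add, Matrix.mulVec_smul, Matrix.mulVec_smul]
      simp
    calc ∑ j, (A.mulVec (t • z₁ + ε • z₂) j) ^ 2
        = ∑ j, (t * A.mulVec z₁ j + ε * A.mulVec z₂ j) ^ 2 :=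
          Finset.sum_congr rfl fun j _ => by rw [hAw j]
      _ = t ^ 2 * α + 2 * t * ε * β + ε ^ 2 * γ := quad_sum _ _ _ _
      _ = α + (lam - α) * (2 * ε * (t * s) / a + 2 * ε ^ 2 - ε ^ 2 / a ^ 2) := by
          rw [hβval, hγval, ht2]
          field_simp
          ring
      _ = α + (lam - α) *
            (2 * ε * Real.sqrt ((1 - ε ^ 2) * (1 - a ^ 2)) / a
              + 2 * ε ^ 2 - ε ^ 2 / a ^ 2) := by rw [hsqrtprod]
  refine ⟨part1, min (1/2) (a * s), lt_min (by norm_num) (mul_pos ha0 hs0), ?_⟩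
  intro ε hε0 hεlt
  have hεhalf : ε < 1/2 := lt_of_lt_of_le hεlt (min_le_left _ _)
  have hεas : ε < a * s := lt_of_lt_of_le hεlt (min_le_right _ _)
  have hε1 : ε < 1 := by linarith
  rw [part1 ε hε0 hε1]
  have hε2 : (0:ℝ) ≤ 1 - ε ^ 2 := by nlinarith
  set t : ℝ := Real.sqrt (1 - ε ^ 2) with ht_def
  have ht2 : t ^ 2 = 1 - ε ^ 2 := Real.sq_sqrt hε2
  have ht0 : 0 ≤ t := Real.sqrt_nonneg _
  have hthalf : (1/2 : ℝ) ≤ t := by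
    have : Real.sqrt ((1:ℝ)/4) ≤ Real.sqrt (1 - ε ^ 2) := by
      apply Real.sqrt_le_sqrt; nlinarith
    calc (1/2 : ℝ) = Real.sqrt (1/4) := by
          rw [show (1:ℝ)/4 = (1/2)^2 by norm_num, Real.sqrt_sq (by norm_num)]
      _ ≤ t := this
  have hsqrtprod : Real.sqrt ((1 - ε ^ 2) * (1 - a ^ 2)) = t * s := by
    rw [Real.sqrt_mul hε2]
  have hnum : 0 < 2 * ε * t * s * a + 2 * ε ^ 2 * a ^ 2 - ε ^ 2 := by
    have h1 : ε * ε < ε * (a * s) := by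
      exact mul_lt_mul_of_pos_left hεas hε0
    nlinarith [mul_pos ha0 hs0, mul_pos hε0 (mul_pos ha0 hs0)]
  have hf : 0 < 2 * ε * Real.sqrt ((1 - ε ^ 2) * (1 - a ^ 2)) / a
      + 2 * ε ^ 2 - ε ^ 2 / a ^ 2 := by
    rw [hsqrtprod]
    have heq : 2 * ε * (t * s) / a + 2 * ε ^ 2 - ε ^ 2 / a ^ 2
        = (2 * ε * t * s * a + 2 * ε ^ 2 * a ^ 2 - ε ^ 2) / a ^ 2 := by
      field_simp
    rw [heq]
    exact div_pos hnum (by positivity)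
  nlinarith [mul_pos (show (0:ℝ) < lam - α by linarith) hf]
end

section
/- The Fair PCA problem min over rank-≤d matrices U of max{loss(A,U_A)/m₁, loss(B,U_B)/m₂} is equivalent to minimizing over V ∈ ℝ^{n×d} with VᵀV = I the quantity max{loss(A, A V Vᵀ)/m₁, loss(B, B V Vᵀ)/m₂}; i.e., the two optimization problems have the same optimal value and any minimizing V yields a minimizing U = [A;B] V Vᵀ. -/
open Matrix BigOperators

lemma frobSq_nonneg {m n : Type*} [Fintype m] [Fintype n] (M : Matrix m n ℝ) : 0 ≤ frobSq M :=
  Finset.sum_nonneg fun _ _ => Finset.sum_nonneg fun _ _ => sq_nonneg _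

lemma frobSq_proj_le {mm n d : ℕ} (V : Matrix (Fin n) (Fin d) ℝ) (hV : Vᵀ * V = 1)
    (M N : Matrix (Fin mm) (Fin n) ℝ) (hN : N * (V * Vᵀ) = N) :
    frobSq (M - M * (V * Vᵀ)) ≤ frobSq (M - N) := by
  set P := V * Vᵀ with hP
  have hP2 : P * P = P := by rw [hP, Matrix.mul_assoc, ← Matrix.mul_assoc Vᵀ, hV, Matrix.one_mul]
  have hPt : Pᵀ = P := by rw [hP, Matrix.transpose_mul, Matrix.transpose_transpose]
  set X := M - M * P with hX
  set Y := M * P - N with hY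
  have hXY : X * Yᵀ = 0 := by
    have hYP : Y * P = Y := by
      rw [hY, Matrix.sub_mul, Matrix.mul_assoc, hP2, hN]
    have hYt : Yᵀ = P * Yᵀ := by
      conv_lhs => rw [← hYP]
      rw [Matrix.transpose_mul, hPt]
    have hXP : X * P = 0 := by
      rw [hX, Matrix.sub_mul, Matrix.mul_assoc, hP2, sub_self]
    rw [hYt, ← Matrix.mul_assoc, hXP, Matrix.zero_mul]
  have hcross : ∑ i, ∑ j, X i j * Y i j = 0 := by
    calc ∑ i, ∑ j, X i j * Y i j = ∑ i, (X * Yᵀ) i i := by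
          refine Finset.sum_congr rfl fun i _ => ?_
          simp [Matrix.mul_apply]
      _ = 0 := by rw [hXY]; simp
  have hsplit : M - N = X + Y := by rw [hX, hY, sub_add_sub_cancel]
  have hexp : frobSq (X + Y) = frobSq X + 2 * (∑ i, ∑ j, X i j * Y i j) + frobSq Y := by
    simp only [frobSq, Matrix.add_apply, add_sq, Finset.sum_add_distrib, Finset.mul_sum]
    ring_nf
  rw [hsplit, hexp, hcross]
  have := frobSq_nonneg Y
  linarith

lemma submatrix_row_mul {κ m n : Type*} [Fintype n] (U : Matrix m n ℝ)
    (P : Matrix n n ℝ) (f : κ → m) :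
    (U * P).submatrix f id = U.submatrix f id * P := by
  ext i j
  simp [Matrix.mul_apply]

lemma rank_submatrix_row_le {κ m n : Type*} [Fintype κ] [Fintype m] [Fintype n] [DecidableEq m]
    (U : Matrix m n ℝ) (f : κ → m) : (U.submatrix f id).rank ≤ U.rank := by
  classical
  have h : U.submatrix f id = (Matrix.of fun i k => if k = f i then (1:ℝ) else 0) * U := by
    ext i j
    rw [Matrix.mul_apply]
    simp [Finset.sum_ite_eq']
  rw [h]
  exact Matrix.rank_mul_le_right _ _

lemma fromRows_submatrix_inl {m₁ m₂ n : Type*} (X : Matrix m₁ n ℝ) (Y : Matrix m₂ n ℝ) :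
    (Matrix.fromRows X Y).submatrix Sum.inl id = X := by
  ext i j; simp

lemma fromRows_submatrix_inr {m₁ m₂ n : Type*} (X : Matrix m₁ n ℝ) (Y : Matrix m₂ n ℝ) :
    (Matrix.fromRows X Y).submatrix Sum.inr id = Y := by
  ext i j; simp

open RealInnerProductSpace in
lemma exists_proj_fix {m : Type*} [Fintype m] {n d : ℕ} (hdn : d ≤ n) (U : Matrix m (Fin n) ℝ)
    (hU : U.rank ≤ d) :
    ∃ V : Matrix (Fin n) (Fin d) ℝ, Vᵀ * V = 1 ∧ U * (V * Vᵀ) = U := by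
  classical
  set W : Submodule ℝ (EuclideanSpace ℝ (Fin n)) :=
    Submodule.span ℝ (Set.range (fun i => (WithLp.toLp 2 (U i) : EuclideanSpace ℝ (Fin n)))) with hW
  have hrank : Module.finrank ℝ W = U.rank := by
    rw [← Matrix.rank_transpose, Matrix.rank_eq_finrank_span_cols]
    have hWm : Submodule.span ℝ (Set.range Uᵀ.col)
        = W.map (WithLp.linearEquiv 2 ℝ (Fin n → ℝ)).toLinearMap := by
      rw [hW, Submodule.map_span, ← Set.range_comp]; rfl
    rw [hWm, LinearEquiv.finrank_map_eq]
  set r := Module.finrank ℝ W with hr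
  have hrd : r ≤ d := hrank ▸ hU
  let b₀ : OrthonormalBasis (Fin r) ℝ W := stdOrthonormalBasis ℝ W
  let v : Fin n → EuclideanSpace ℝ (Fin n) :=
    fun i => if h : (i : ℕ) < r then (b₀ ⟨i, h⟩ : EuclideanSpace ℝ (Fin n)) else 0
  have hv : Orthonormal ℝ (({i : Fin n | (i : ℕ) < r}).restrict v) := by
    rw [orthonormal_iff_ite]
    rintro ⟨i, hi⟩ ⟨j, hj⟩
    have hi' : (i : ℕ) < r := hi
    have hj' : (j : ℕ) < r := hj
    change inner ℝ (v i) (v j) = _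
    simp only [v]
    rw [dif_pos hi', dif_pos hj', ← Submodule.coe_inner,
      orthonormal_iff_ite.mp b₀.orthonormal ⟨i, hi'⟩ ⟨j, hj'⟩]
    simp [Fin.ext_iff, Subtype.ext_iff]
  obtain ⟨b, hb⟩ := hv.exists_orthonormalBasis_extension_of_card_eq
    (by simp : Module.finrank ℝ (EuclideanSpace ℝ (Fin n)) = Fintype.card (Fin n))
  refine ⟨Matrix.of fun i j => b (Fin.castLE hdn j) i, ?_, ?_⟩
  · ext j k
    have h : (inner ℝ (b (Fin.castLE hdn j)) (b (Fin.castLE hdn k)) : ℝ)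
        = if Fin.castLE hdn j = Fin.castLE hdn k then 1 else 0 :=
      orthonormal_iff_ite.mp b.orthonormal _ _
    have h2 : (inner ℝ (b (Fin.castLE hdn j)) (b (Fin.castLE hdn k)) : ℝ)
        = ∑ i, b (Fin.castLE hdn j) i * b (Fin.castLE hdn k) i := by
      simp [PiLp.inner_apply, RCLike.inner_apply, mul_comm]
    rw [h] at h2
    simp only [Matrix.mul_apply, Matrix.transpose_apply, Matrix.of_apply, Matrix.one_apply]
    rw [← h2]
    simp [Fin.castLE_inj]
  · have hWspan : W = Submodule.span ℝ
        (Set.range (fun s : Fin r => (b₀ s : EuclideanSpace ℝ (Fin n)))) := by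
      have h1 : Submodule.span ℝ (Set.range b₀) = (⊤ : Submodule ℝ W) := by
        rw [← b₀.coe_toBasis]; exact b₀.toBasis.span_eq
      have h2 := congrArg (Submodule.map W.subtype) h1
      rw [Submodule.map_span, Submodule.map_top, Submodule.range_subtype] at h2
      have h3 : ⇑W.subtype '' Set.range ⇑b₀
          = Set.range (fun s : Fin r => (b₀ s : EuclideanSpace ℝ (Fin n))) := by
        rw [← Set.range_comp]; rfl
      exact h2.symm.trans (congrArg _ h3)
    have horth : ∀ t : Fin n, d ≤ (t : ℕ) → ∀ w ∈ W,
        (inner ℝ (b t) w : ℝ) = 0 := by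
      intro t ht w hw
      rw [hWspan] at hw
      induction hw using Submodule.span_induction with
      | mem x hx =>
        obtain ⟨s, rfl⟩ := hx
        have hsn : (s : ℕ) < n := lt_of_lt_of_le (lt_of_lt_of_le s.2 hrd) hdn
        have hs : ((⟨(s : ℕ), hsn⟩ : Fin n) : ℕ) < r := s.2
        have hbs := hb ⟨(s : ℕ), hsn⟩ hs
        have hvs : v ⟨(s : ℕ), hsn⟩ = (b₀ s : EuclideanSpace ℝ (Fin n)) := by
          simp only [v]
          rw [dif_pos hs]
        show (inner ℝ (b t) ((b₀ s : EuclideanSpace ℝ (Fin n))) : ℝ) = 0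
        rw [← hvs, ← hbs]
        refine (orthonormal_iff_ite.mp b.orthonormal t _).trans ?_
        rw [if_neg]
        intro hc
        have : (t : ℕ) = (s : ℕ) := congrArg Fin.val hc
        omega
      | zero => exact inner_zero_right _
      | add x y _ _ hx hy => rw [inner_add_right, hx, hy, add_zero]
      | smul c x _ hx => rw [inner_smul_right, hx, mul_zero]
    ext i j
    have hu : (WithLp.toLp 2 (U i) : EuclideanSpace ℝ (Fin n)) ∈ W := Submodule.subset_span ⟨i, rfl⟩
    have hrepr := b.sum_repr' (WithLp.toLp 2 (U i) : EuclideanSpace ℝ (Fin n))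
    have hB : ∑ t : Fin n, (inner ℝ (b t) (WithLp.toLp 2 (U i) : EuclideanSpace ℝ (Fin n)) : ℝ) * b t j
        = U i j := by
      calc ∑ t : Fin n, (inner ℝ (b t) (WithLp.toLp 2 (U i) : EuclideanSpace ℝ (Fin n)) : ℝ) * b t j
          = ∑ t : Fin n,
            ((inner ℝ (b t) (WithLp.toLp 2 (U i) : EuclideanSpace ℝ (Fin n)) : ℝ) • b t) j :=
            Finset.sum_congr rfl fun t _ => rfl
        _ = (∑ t : Fin n,
            (inner ℝ (b t) (WithLp.toLp 2 (U i) : EuclideanSpace ℝ (Fin n)) : ℝ) • b t) j :=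
            by simp only [WithLp.ofLp_sum, Finset.sum_apply]
        _ = U i j := congrArg (fun x => x j) hrepr
    have hsub : ∑ l : Fin d,
        (inner ℝ (b (Fin.castLE hdn l)) (WithLp.toLp 2 (U i) : EuclideanSpace ℝ (Fin n)) : ℝ)
          * b (Fin.castLE hdn l) j = U i j := by
      rw [← hB]
      calc ∑ l : Fin d,
            (inner ℝ (b (Fin.castLE hdn l)) (WithLp.toLp 2 (U i) : EuclideanSpace ℝ (Fin n)) : ℝ)
              * b (Fin.castLE hdn l) j
          = ∑ t ∈ Finset.univ.map (Fin.castLEEmb hdn),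
            (inner ℝ (b t) (WithLp.toLp 2 (U i) : EuclideanSpace ℝ (Fin n)) : ℝ) * b t j :=
            (Finset.sum_map Finset.univ (Fin.castLEEmb hdn)
              (fun t => (inner ℝ (b t) (WithLp.toLp 2 (U i) : EuclideanSpace ℝ (Fin n)) : ℝ) * b t j)).symm
        _ = ∑ t : Fin n, (inner ℝ (b t) (WithLp.toLp 2 (U i) : EuclideanSpace ℝ (Fin n)) : ℝ) * b t j := by
            refine Finset.sum_subset (Finset.subset_univ _) ?_
            intro t _ ht
            have htd : d ≤ (t : ℕ) := by
              by_contra hc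
              push_neg at hc
              exact ht (Finset.mem_map.mpr ⟨⟨(t : ℕ), hc⟩, Finset.mem_univ _, Fin.ext rfl⟩)
            rw [horth t htd _ hu, zero_mul]
    calc (U * (Matrix.of (fun i j => b (Fin.castLE hdn j) i) *
            (Matrix.of (fun i j => b (Fin.castLE hdn j) i))ᵀ)) i j
        = ∑ l : Fin d, (∑ k, b (Fin.castLE hdn l) k * U i k) * b (Fin.castLE hdn l) j := by
          simp only [Matrix.mul_apply, Matrix.transpose_apply, Matrix.of_apply,
            Finset.mul_sum, Finset.sum_mul]
          rw [Finset.sum_comm]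
          all_goals exact Finset.sum_congr rfl fun l _ =>
            Finset.sum_congr rfl fun k _ => by ring
      _ = ∑ l : Fin d,
            (inner ℝ (b (Fin.castLE hdn l)) (WithLp.toLp 2 (U i) : EuclideanSpace ℝ (Fin n)) : ℝ)
              * b (Fin.castLE hdn l) j := by
          refine Finset.sum_congr rfl fun l _ => ?_
          congr 1
          simp [PiLp.inner_apply, RCLike.inner_apply, mul_comm]
      _ = U i j := hsub

set_option maxHeartbeats 1000000 in
/-- The Fair PCA problem over rank-`≤ d` matrices is equivalent to the
optimization over matrices `V` with orthonormal columns: the optimal values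
coincide, and any minimizing `V` yields a minimizing `U = [A; B] V Vᵀ`. -/
theorem fairPCA_equiv_orthonormal {m₁ m₂ n d : ℕ} (hm₁ : 0 < m₁) (hm₂ : 0 < m₂)
    (A Ahat : Matrix (Fin m₁) (Fin n) ℝ) (B Bhat : Matrix (Fin m₂) (Fin n) ℝ)
    (hA : IsOptRankApprox d A Ahat) (hB : IsOptRankApprox d B Bhat) :
    sInf {x : ℝ | ∃ U : Matrix (Fin m₁ ⊕ Fin m₂) (Fin n) ℝ, U.rank ≤ d ∧
        x = max ((frobSq (A - U.submatrix Sum.inl id) - frobSq (A - Ahat)) / m₁)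
              ((frobSq (B - U.submatrix Sum.inr id) - frobSq (B - Bhat)) / m₂)}
      = sInf {x : ℝ | ∃ V : Matrix (Fin n) (Fin d) ℝ, Vᵀ * V = 1 ∧
        x = max ((frobSq (A - A * V * Vᵀ) - frobSq (A - Ahat)) / m₁)
              ((frobSq (B - B * V * Vᵀ) - frobSq (B - Bhat)) / m₂)} ∧
    ∀ V : Matrix (Fin n) (Fin d) ℝ, Vᵀ * V = 1 →
      (∀ V' : Matrix (Fin n) (Fin d) ℝ, V'ᵀ * V' = 1 →
        max ((frobSq (A - A * V * Vᵀ) - frobSq (A - Ahat)) / m₁)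
            ((frobSq (B - B * V * Vᵀ) - frobSq (B - Bhat)) / m₂) ≤
        max ((frobSq (A - A * V' * V'ᵀ) - frobSq (A - Ahat)) / m₁)
            ((frobSq (B - B * V' * V'ᵀ) - frobSq (B - Bhat)) / m₂)) →
      (Matrix.fromRows (A * V * Vᵀ) (B * V * Vᵀ)).rank ≤ d ∧
      ∀ U' : Matrix (Fin m₁ ⊕ Fin m₂) (Fin n) ℝ, U'.rank ≤ d →
        max ((frobSq (A - A * V * Vᵀ) - frobSq (A - Ahat)) / m₁)
            ((frobSq (B - B * V * Vᵀ) - frobSq (B - Bhat)) / m₂) ≤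
        max ((frobSq (A - U'.submatrix Sum.inl id) - frobSq (A - Ahat)) / m₁)
            ((frobSq (B - U'.submatrix Sum.inr id) - frobSq (B - Bhat)) / m₂) := by
  have hm₁' : (0:ℝ) < m₁ := by exact_mod_cast hm₁
  have hm₂' : (0:ℝ) < m₂ := by exact_mod_cast hm₂
  set S := {x : ℝ | ∃ U : Matrix (Fin m₁ ⊕ Fin m₂) (Fin n) ℝ, U.rank ≤ d ∧
        x = max ((frobSq (A - U.submatrix Sum.inl id) - frobSq (A - Ahat)) / m₁)
              ((frobSq (B - U.submatrix Sum.inr id) - frobSq (B - Bhat)) / m₂)} with hSdef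
  set T := {x : ℝ | ∃ V : Matrix (Fin n) (Fin d) ℝ, Vᵀ * V = 1 ∧
        x = max ((frobSq (A - A * V * Vᵀ) - frobSq (A - Ahat)) / m₁)
              ((frobSq (B - B * V * Vᵀ) - frobSq (B - Bhat)) / m₂)} with hTdef
  -- lower bound for S
  have lbS : ∀ x ∈ S, (0:ℝ) ≤ x := by
    rintro x ⟨U, hU, rfl⟩
    have h1 : frobSq (A - Ahat) ≤ frobSq (A - U.submatrix Sum.inl id) :=
      hA.2 _ ((rank_submatrix_row_le U Sum.inl).trans hU)
    refine le_trans ?_ (le_max_left _ _)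
    exact div_nonneg (sub_nonneg.mpr h1) hm₁'.le
  -- T ⊆ S
  have hTS : T ⊆ S := by
    rintro x ⟨V, hV, rfl⟩
    refine ⟨Matrix.fromRows (A * V * Vᵀ) (B * V * Vᵀ), ?_, ?_⟩
    · rw [show Matrix.fromRows (A * V * Vᵀ) (B * V * Vᵀ)
          = Matrix.fromRows (A * V) (B * V) * Vᵀ from (Matrix.fromRows_mul _ _ _).symm]
      exact (Matrix.rank_mul_le_right _ _).trans
        ((Matrix.rank_le_card_height Vᵀ).trans (Fintype.card_fin d).le)
    · rw [fromRows_submatrix_inl, fromRows_submatrix_inr]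
  have lbT : ∀ x ∈ T, (0:ℝ) ≤ x := fun x hx => lbS x (hTS hx)
  -- orthonormal V forces d ≤ n
  have hdle : ∀ V : Matrix (Fin n) (Fin d) ℝ, Vᵀ * V = 1 → d ≤ n := by
    intro V hV
    have h1 : (Vᵀ * V).rank = d := by rw [hV, Matrix.rank_one, Fintype.card_fin]
    have h2 : (Vᵀ * V).rank ≤ n := (Matrix.rank_mul_le_right _ _).trans
      ((Matrix.rank_le_card_height V).trans (Fintype.card_fin n).le)
    omega
  -- key domination
  have key : ∀ (_ : d ≤ n) (U : Matrix (Fin m₁ ⊕ Fin m₂) (Fin n) ℝ), U.rank ≤ d →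
      ∃ V : Matrix (Fin n) (Fin d) ℝ, Vᵀ * V = 1 ∧
        max ((frobSq (A - A * V * Vᵀ) - frobSq (A - Ahat)) / m₁)
            ((frobSq (B - B * V * Vᵀ) - frobSq (B - Bhat)) / m₂) ≤
        max ((frobSq (A - U.submatrix Sum.inl id) - frobSq (A - Ahat)) / m₁)
            ((frobSq (B - U.submatrix Sum.inr id) - frobSq (B - Bhat)) / m₂) := by
    intro hdn U hU
    obtain ⟨V, hV, hfix⟩ := exists_proj_fix hdn U hU
    refine ⟨V, hV, ?_⟩
    have hfixA : U.submatrix Sum.inl id * (V * Vᵀ) = U.submatrix Sum.inl id := by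
      rw [← submatrix_row_mul, hfix]
    have hfixB : U.submatrix Sum.inr id * (V * Vᵀ) = U.submatrix Sum.inr id := by
      rw [← submatrix_row_mul, hfix]
    have hA' : frobSq (A - A * V * Vᵀ) ≤ frobSq (A - U.submatrix Sum.inl id) := by
      rw [Matrix.mul_assoc]
      exact frobSq_proj_le V hV A _ hfixA
    have hB' : frobSq (B - B * V * Vᵀ) ≤ frobSq (B - U.submatrix Sum.inr id) := by
      rw [Matrix.mul_assoc]
      exact frobSq_proj_le V hV B _ hfixB
    exact max_le_max (by gcongr) (by gcongr)
  constructor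
  · -- equality of infima
    by_cases hex : ∃ V : Matrix (Fin n) (Fin d) ℝ, Vᵀ * V = 1
    · obtain ⟨V₀, hV₀⟩ := hex
      have hdn := hdle V₀ hV₀
      have hTne : T.Nonempty := ⟨_, ⟨V₀, hV₀, rfl⟩⟩
      have hSne : S.Nonempty := hTne.mono hTS
      apply le_antisymm
      · exact csInf_le_csInf ⟨0, lbS⟩ hTne hTS
      · apply le_csInf hSne
        rintro x ⟨U, hU, rfl⟩
        obtain ⟨V, hV, hle⟩ := key hdn U hU
        exact le_trans (csInf_le ⟨0, lbT⟩ ⟨V, hV, rfl⟩) hle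
    · -- no orthonormal V: then n < d and both infima are 0
      have hTe : T = ∅ := by
        rw [Set.eq_empty_iff_forall_notMem]
        rintro x ⟨V, hV, _⟩
        exact hex ⟨V, hV⟩
      have hnd : n < d := by
        by_contra hc
        push_neg at hc
        refine hex ⟨Matrix.of fun i j => if i = Fin.castLE hc j then (1:ℝ) else 0, ?_⟩
        ext j k
        rw [Matrix.mul_apply]
        rw [Finset.sum_eq_single (Fin.castLE hc j)]
        · simp [Matrix.one_apply, Fin.castLE_inj, eq_comm]
        · intro i _ hi
          simp [Matrix.transpose_apply, hi]
        · simp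
      have h0S : (0:ℝ) ∈ S := by
        have hAr : A.rank ≤ d :=
          (Matrix.rank_le_card_width A).trans ((Fintype.card_fin n).le.trans hnd.le)
        have hBr : B.rank ≤ d :=
          (Matrix.rank_le_card_width B).trans ((Fintype.card_fin n).le.trans hnd.le)
        have hAhat : frobSq (A - Ahat) = 0 := by
          refine le_antisymm ?_ (frobSq_nonneg _)
          have := hA.2 A hAr
          simpa [frobSq] using this
        have hBhat : frobSq (B - Bhat) = 0 := by
          refine le_antisymm ?_ (frobSq_nonneg _)
          have := hB.2 B hBr
          simpa [frobSq] using this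
        refine ⟨Matrix.fromRows A B, ?_, ?_⟩
        · exact (Matrix.rank_le_card_width _).trans ((Fintype.card_fin n).le.trans hnd.le)
        · rw [fromRows_submatrix_inl, fromRows_submatrix_inr, hAhat, hBhat]
          simp [frobSq]
      rw [hTe, Real.sInf_empty]
      exact le_antisymm (csInf_le ⟨0, lbS⟩ h0S) (le_csInf ⟨0, h0S⟩ lbS)
  · -- part 2
    intro V hV hmin
    have hdn := hdle V hV
    constructor
    · rw [show Matrix.fromRows (A * V * Vᵀ) (B * V * Vᵀ)
          = Matrix.fromRows (A * V) (B * V) * Vᵀ from (Matrix.fromRows_mul _ _ _).symm]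
      exact (Matrix.rank_mul_le_right _ _).trans
        ((Matrix.rank_le_card_height Vᵀ).trans (Fintype.card_fin d).le)
    · intro U' hU'
      obtain ⟨V'', hV'', hle⟩ := key hdn U' hU'
      exact (hmin V'' hV'').trans hle
end

section
/- Any extreme point (λ̄, z*) of the linear program minimize z subject to z ≥ α − Σⱼ λⱼ aⱼ, z ≥ β − Σⱼ λⱼ bⱼ, Σⱼ λⱼ ≤ d, and 0 ≤ λⱼ ≤ 1 for j ∈ [n] (with d ≤ n an integer) has at most two fractional coordinates λⱼ ∈ (0,1); moreover if exactly two coordinates are fractional then they sum to 1 and at least d−1 coordinates equal 1. -/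
open BigOperators
open Filter Topology


lemma pert_zero {E : Type*} [AddCommGroup E] [Module ℝ E] {S : Set E} {p v : E}
    (hext : p ∈ Set.extremePoints ℝ S) (h1 : p + v ∈ S) (h2 : p - v ∈ S) : v = 0 := by
  have hseg : p ∈ openSegment ℝ (p - v) (p + v) := by
    refine ⟨1/2, 1/2, by norm_num, by norm_num, by norm_num, ?_⟩
    module
  have h := hext.2 h2 h1 hseg
  exact sub_eq_self.mp h

lemma pert {n : ℕ} (d : ℕ) (α β : ℝ) (a b : Fin n → ℝ) (S : Set ((Fin n → ℝ) × ℝ))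
    (hS : S = {p : (Fin n → ℝ) × ℝ |
      α - ∑ j, p.1 j * a j ≤ p.2 ∧
      β - ∑ j, p.1 j * b j ≤ p.2 ∧
      (∑ j, p.1 j) ≤ (d : ℝ) ∧
      ∀ j, 0 ≤ p.1 j ∧ p.1 j ≤ 1})
    (lam : Fin n → ℝ) (z : ℝ)
    (hext : (lam, z) ∈ Set.extremePoints ℝ S)
    (δ : Fin n → ℝ)
    (hsupp : ∀ j, δ j ≠ 0 → 0 < lam j ∧ lam j < 1)
    (hc : ∑ j, δ j * (a j - b j) = 0)
    (hsum : (∑ j, δ j) = 0 ∨ (∑ j, lam j) < d) : δ = 0 := by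
  have hmem := hext.1
  rw [hS] at hmem
  obtain ⟨h1, h2, h3, h4⟩ := hmem
  simp only at h1 h2 h3 h4
  set t : ℝ := ∑ j, δ j * a j with ht
  have hba : ∑ j, δ j * b j = t := by
    have : ∑ j, δ j * a j - ∑ j, δ j * b j = 0 := by
      rw [← Finset.sum_sub_distrib]
      simpa [mul_sub] using hc
    linarith
  -- eventual membership
  have E : ∀ᶠ ε in 𝓝 (0:ℝ), (lam + ε • δ, z - ε * t) ∈ S := by
    rw [hS]
    have key1 : ∀ ε : ℝ, ∑ j, (lam + ε • δ) j * a j = (∑ j, lam j * a j) + ε * t := by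
      intro ε
      simp only [Pi.add_apply, Pi.smul_apply, smul_eq_mul, add_mul, Finset.sum_add_distrib,
        Finset.mul_sum, ht, mul_assoc]
    have key2 : ∀ ε : ℝ, ∑ j, (lam + ε • δ) j * b j = (∑ j, lam j * b j) + ε * t := by
      intro ε
      rw [← hba]
      simp only [Pi.add_apply, Pi.smul_apply, smul_eq_mul, add_mul, Finset.sum_add_distrib,
        Finset.mul_sum, mul_assoc]
    have key3 : ∀ ε : ℝ, ∑ j, (lam + ε • δ) j = (∑ j, lam j) + ε * ∑ j, δ j := by
      intro ε
      simp [Finset.sum_add_distrib, Finset.mul_sum]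
    have E3 : ∀ᶠ ε in 𝓝 (0:ℝ), (∑ j, (lam + ε • δ) j) ≤ (d:ℝ) := by
      rcases hsum with h | h
      · exact Eventually.of_forall fun ε => by rw [key3, h]; simpa using h3
      · have hcont : ContinuousAt (fun ε : ℝ => (∑ j, lam j) + ε * ∑ j, δ j) 0 := by fun_prop
        have := hcont.tendsto
        simp only [zero_mul, add_zero] at this
        filter_upwards [this.eventually_lt_const h] with ε hε
        rw [key3]; exact le_of_lt hε
      
    have E4 : ∀ᶠ ε in 𝓝 (0:ℝ), ∀ j, 0 ≤ (lam + ε • δ) j ∧ (lam + ε • δ) j ≤ 1 := by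
      rw [eventually_all]
      intro j
      rcases eq_or_ne (δ j) 0 with h | h
      · exact Eventually.of_forall fun ε => by simpa [h] using h4 j
      · obtain ⟨hj0, hj1⟩ := hsupp j h
        have hcont : ContinuousAt (fun ε : ℝ => lam j + ε * δ j) 0 := by fun_prop
        have htend := hcont.tendsto
        simp only [zero_mul, add_zero] at htend
        filter_upwards [htend.eventually_const_lt hj0, htend.eventually_lt_const hj1] with ε ha hb
        exact ⟨le_of_lt ha, le_of_lt hb⟩
    filter_upwards [E3, E4] with ε hε3 hε4
    refine ⟨?_, ?_, hε3, hε4⟩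
    · simp only [key1]; linarith
    · simp only [key2]; linarith
  have E2 : ∀ᶠ ε in 𝓝 (0:ℝ), (lam + (-ε) • δ, z - (-ε) * t) ∈ S :=
    (continuous_neg.tendsto' (0:ℝ) 0 neg_zero).eventually E
  have EE : ∀ᶠ ε in 𝓝[≠] (0:ℝ),
      (lam + ε • δ, z - ε * t) ∈ S ∧ (lam + (-ε) • δ, z - (-ε) * t) ∈ S :=
    (E.and E2).filter_mono nhdsWithin_le_nhds
  obtain ⟨ε, ⟨hP, hM⟩, hne⟩ := (EE.and self_mem_nhdsWithin).exists
  have hv : (ε • δ, -(ε * t)) = (0 : (Fin n → ℝ) × ℝ) := by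
    apply pert_zero hext
    · convert hP using 2 <;> simp [sub_eq_add_neg]
    · convert hM using 2
      · funext j; simp [sub_eq_add_neg]
      · simp [sub_eq_add_neg]
  have : ε • δ = 0 := congrArg Prod.fst hv
  rcases smul_eq_zero.mp this with h | h
  · exact absurd h (by simpa using hne)
  · exact h

/-- Any extreme point of the fair PCA LP has at most two fractional
coordinates; if exactly two are fractional they sum to 1 and at least
`d − 1` coordinates equal 1. -/
theorem lp_extreme_point_fractional {n : ℕ} (d : ℕ) (hd : d ≤ n)
    (α β : ℝ) (a b : Fin n → ℝ) (S : Set ((Fin n → ℝ) × ℝ))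
    (hS : S = {p : (Fin n → ℝ) × ℝ |
      α - ∑ j, p.1 j * a j ≤ p.2 ∧
      β - ∑ j, p.1 j * b j ≤ p.2 ∧
      (∑ j, p.1 j) ≤ (d : ℝ) ∧
      ∀ j, 0 ≤ p.1 j ∧ p.1 j ≤ 1})
    (lam : Fin n → ℝ) (z : ℝ)
    (hext : (lam, z) ∈ Set.extremePoints ℝ S) :
    (Finset.univ.filter fun j => 0 < lam j ∧ lam j < 1).card ≤ 2 ∧
    ((Finset.univ.filter fun j => 0 < lam j ∧ lam j < 1).card = 2 →
      (∑ j ∈ Finset.univ.filter fun j => 0 < lam j ∧ lam j < 1, lam j) = 1 ∧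
      d - 1 ≤ (Finset.univ.filter fun j => lam j = 1).card) := by
  have hmem := hext.1
  rw [hS] at hmem
  obtain ⟨h1, h2, h3, h4⟩ := hmem
  simp only at h1 h2 h3 h4
  set F := Finset.univ.filter fun j => 0 < lam j ∧ lam j < 1 with hF
  have hFmem : ∀ j, j ∈ F ↔ (0 < lam j ∧ lam j < 1) := by
    intro j; simp [hF]
  set c : Fin n → ℝ := fun j => a j - b j with hcdef
  -- two-index perturbation helper
  have two_idx : ∀ i j : Fin n, i ≠ j → i ∈ F → j ∈ F → ∀ x y : ℝ,
      x * c i + y * c j = 0 → (x + y = 0 ∨ (∑ l, lam l) < d) → x = 0 ∧ y = 0 := by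
    intro i j hij hi hj x y hxy hs
    set δ : Fin n → ℝ := fun l => (if l = i then x else 0) + (if l = j then y else 0) with hδ
    have hres : δ = 0 := by
      apply pert d α β a b S hS lam z hext
      · intro l hl
        rcases eq_or_ne l i with rfl | hli
        · exact (hFmem l).mp hi
        rcases eq_or_ne l j with rfl | hlj
        · exact (hFmem l).mp hj
        · exact absurd (by simp [hδ, hli, hlj]) hl
      · have : ∑ l, δ l * c l = x * c i + y * c j := by
          simp [hδ, add_mul, Finset.sum_add_distrib, ite_mul]
        rw [show (fun l => a l - b l) = c from rfl] at *
        calc ∑ l, δ l * c l = x * c i + y * c j := this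
        _ = 0 := hxy
      · have : ∑ l, δ l = x + y := by
          simp [hδ, Finset.sum_add_distrib]
        rw [this]; exact hs
    constructor
    · have := congrFun hres i; simpa [hδ, hij] using this
    · have := congrFun hres j; simpa [hδ, hij.symm] using this
  -- claim 1: card ≤ 2
  have hcard : F.card ≤ 2 := by
    by_contra hgt
    push_neg at hgt
    obtain ⟨i, j, k, hi, hj, hk, hij, hik, hjk⟩ := Finset.two_lt_card_iff.mp hgt
    rcases eq_or_ne (c i) (c j) with hcc | hcc
    · obtain ⟨h, _⟩ := two_idx i j hij hi hj 1 (-1) (by rw [hcc]; ring) (Or.inl (by ring))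
      norm_num at h
    · -- three-index perturbation
      set x := c j - c k with hx
      set y := c k - c i with hy
      set w := c i - c j with hw
      set δ : Fin n → ℝ := fun l => (if l = i then x else 0) + (if l = j then y else 0)
        + (if l = k then w else 0) with hδ
      have hres : δ = 0 := by
        apply pert d α β a b S hS lam z hext
        · intro l hl
          rcases eq_or_ne l i with rfl | hli
          · exact (hFmem l).mp hi
          rcases eq_or_ne l j with rfl | hlj
          · exact (hFmem l).mp hj
          rcases eq_or_ne l k with rfl | hlk
          · exact (hFmem l).mp hk
          · exact absurd (by simp [hδ, hli, hlj, hlk]) hl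
        · have : ∑ l, δ l * (a l - b l) = x * c i + y * c j + w * c k := by
            simp [hδ, add_mul, Finset.sum_add_distrib, ite_mul, hcdef]
          rw [this, hx, hy, hw]; ring
        · left
          have : ∑ l, δ l = x + y + w := by
            simp [hδ, Finset.sum_add_distrib]
          rw [this, hx, hy, hw]; ring
      have := congrFun hres k
      simp [hδ, hik.symm, hjk.symm] at this
      exact hcc (by rw [hw] at this; linarith)
  refine ⟨hcard, ?_⟩
  intro hc2
  obtain ⟨i, j, hij, hFij⟩ := Finset.card_eq_two.mp hc2
  have hi : i ∈ F := by rw [hFij]; simp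
  have hj : j ∈ F := by rw [hFij]; simp
  have hcc : c i ≠ c j := by
    intro h
    obtain ⟨h', _⟩ := two_idx i j hij hi hj 1 (-1) (by rw [h]; ring) (Or.inl (by ring))
    norm_num at h'
  -- sum is tight
  have htight : (∑ l, lam l) = (d : ℝ) := by
    by_contra hne
    have hlt : (∑ l, lam l) < d := lt_of_le_of_ne h3 hne
    obtain ⟨h', h''⟩ := two_idx i j hij hi hj (c j) (-(c i)) (by ring) (Or.inr hlt)
    exact hcc (by rw [h']; linarith)
  -- arithmetic
  set O := Finset.univ.filter fun j => lam j = 1 with hO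
  have hdisj : Disjoint F O := by
    rw [Finset.disjoint_left]
    intro l hl hl'
    have hfr := (hFmem l).mp hl
    have hl1 : lam l = 1 := by simpa [hO] using hl'
    linarith [hfr.2]
  have hzero : ∀ l, l ∉ F ∪ O → lam l = 0 := by
    intro l hl
    simp only [Finset.mem_union, hFmem, hO, Finset.mem_filter, Finset.mem_univ, true_and,
      not_or] at hl
    obtain ⟨hl0, hl1⟩ := h4 l
    rcases lt_or_eq_of_le hl1 with h | h
    · by_contra hne
      exact hl.1 ⟨lt_of_le_of_ne hl0 (Ne.symm hne), h⟩
    · exact absurd h hl.2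
  have hsplit : (∑ l, lam l) = (∑ l ∈ F, lam l) + O.card := by
    have e1 : (∑ l ∈ F ∪ O, lam l) = ∑ l, lam l :=
      Finset.sum_subset (Finset.subset_univ _) (fun l _ hl => hzero l hl)
    rw [← e1, Finset.sum_union hdisj]
    congr 1
    have : (∑ l ∈ O, lam l) = ∑ l ∈ O, (1:ℝ) := by
      refine Finset.sum_congr rfl fun l hl => ?_
      simpa [hO] using hl
    rw [this, Finset.sum_const, nsmul_eq_mul, mul_one]
  have hiF := (hFmem i).mp hi
  have hjF := (hFmem j).mp hj
  have hFsum : (∑ l ∈ F, lam l) = lam i + lam j := by rw [hFij]; exact Finset.sum_pair hij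
  have heq : lam i + lam j + (O.card : ℝ) = d := by
    rw [← hFsum]; rw [hsplit] at htight; linarith
  have hOd : O.card < d := by
    have : (O.card : ℝ) < d := by linarith [hiF.1, hjF.1]
    exact_mod_cast this
  have hdO : d < O.card + 2 := by
    have : (d : ℝ) < O.card + 2 := by linarith [hiF.2, hjF.2]
    exact_mod_cast this
  have hdeq : d = O.card + 1 := by omega
  constructor
  · rw [hFsum]
    have : (d : ℝ) = O.card + 1 := by exact_mod_cast hdeq
    linarith
  · omega
end

section
/- If W is a global minimizer of V ↦ max{loss(A,AVVᵀ)/m₁, loss(B,BVVᵀ)/m₂} over orthonormal V ∈ ℝ^{n×d}, and loss(A,AWWᵀ)/m₁ > loss(B,BWWᵀ)/m₂, then W is a local minimizer of the function g_A(V) = ‖A − A V Vᵀ‖_F² on the Grassmannian, with g_A(W) > 0 strictly greater than the global minimum of g_A. -/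
open Matrix BigOperators

lemma entry_sq_le_frobSq {m n : Type*} [Fintype m] [Fintype n]
    (M : Matrix m n ℝ) (i : m) (j : n) : (M i j) ^ 2 ≤ frobSq M := by
  unfold frobSq
  calc (M i j) ^ 2 ≤ ∑ j', (M i j') ^ 2 :=
        Finset.single_le_sum (fun k _ => sq_nonneg (M i k)) (Finset.mem_univ j)
    _ ≤ ∑ i', ∑ j', (M i' j') ^ 2 :=
        Finset.single_le_sum
          (fun k _ => Finset.sum_nonneg fun l _ => sq_nonneg (M k l))
          (Finset.mem_univ i)

lemma continuous_gB {m n d : ℕ} (B : Matrix (Fin m) (Fin n) ℝ) :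
    Continuous fun V : Matrix (Fin n) (Fin d) ℝ => frobSq (B - B * V * Vᵀ) := by
  have h : Continuous fun V : Matrix (Fin n) (Fin d) ℝ => B - B * V * Vᵀ :=
    continuous_const.sub
      ((continuous_const.matrix_mul continuous_id).matrix_mul
        (continuous_id.matrix_transpose))
  unfold frobSq
  refine continuous_finset_sum _ fun i _ => continuous_finset_sum _ fun j _ => ?_
  exact (((continuous_apply j).comp ((continuous_apply i).comp h)).pow 2)

lemma rank_BWWt_le {m n d : ℕ} (B : Matrix (Fin m) (Fin n) ℝ)
    (W : Matrix (Fin n) (Fin d) ℝ) : (B * W * Wᵀ).rank ≤ d :=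
  le_trans (Matrix.rank_mul_le_right _ _) (by simpa using (Wᵀ).rank_le_card_height)

/-- If `W` globally minimizes the fair PCA objective and the loss of group `A`
is strictly larger than that of group `B` at `W`, then `W` is a local minimum
of `g_A(V) = ‖A − A V Vᵀ‖_F²`, with value strictly above the global minimum of
`g_A`. -/
theorem strict_loss_gap_gives_local_min {m₁ m₂ n d : ℕ}
    (hm₁ : 0 < m₁) (hm₂ : 0 < m₂)
    (A Ahat : Matrix (Fin m₁) (Fin n) ℝ) (B Bhat : Matrix (Fin m₂) (Fin n) ℝ)
    (hA : IsOptRankApprox d A Ahat) (hB : IsOptRankApprox d B Bhat)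
    (W : Matrix (Fin n) (Fin d) ℝ) (hW : Wᵀ * W = 1)
    (hglob : ∀ V : Matrix (Fin n) (Fin d) ℝ, Vᵀ * V = 1 →
      max ((frobSq (A - A * W * Wᵀ) - frobSq (A - Ahat)) / m₁)
          ((frobSq (B - B * W * Wᵀ) - frobSq (B - Bhat)) / m₂) ≤
      max ((frobSq (A - A * V * Vᵀ) - frobSq (A - Ahat)) / m₁)
          ((frobSq (B - B * V * Vᵀ) - frobSq (B - Bhat)) / m₂))
    (hstrict : (frobSq (B - B * W * Wᵀ) - frobSq (B - Bhat)) / m₂ <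
        (frobSq (A - A * W * Wᵀ) - frobSq (A - Ahat)) / m₁) :
    (∃ ε > (0 : ℝ), ∀ V : Matrix (Fin n) (Fin d) ℝ, Vᵀ * V = 1 →
      frobSq (V - W) < ε →
        frobSq (A - A * W * Wᵀ) ≤ frobSq (A - A * V * Vᵀ)) ∧
    frobSq (A - Ahat) < frobSq (A - A * W * Wᵀ) := by
  have hm₁' : (0:ℝ) < m₁ := by exact_mod_cast hm₁
  have hm₂' : (0:ℝ) < m₂ := by exact_mod_cast hm₂
  set c := frobSq (A - Ahat) with hc
  set cB := frobSq (B - Bhat) with hcB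
  set L := (frobSq (A - A * W * Wᵀ) - c) / m₁ with hL
  set b := (frobSq (B - B * W * Wᵀ) - cB) / m₂ with hb
  have hBopt : cB ≤ frobSq (B - B * W * Wᵀ) := hB.2 _ (rank_BWWt_le B W)
  have hbnn : 0 ≤ b := div_nonneg (by linarith) hm₂'.le
  have hL0 : 0 < L := lt_of_le_of_lt hbnn hstrict
  have part2 : c < frobSq (A - A * W * Wᵀ) := by
    have := (lt_div_iff₀ hm₁').mp hL0
    linarith
  refine ⟨?_, part2⟩
  -- continuity of the B-loss at W
  have hcont : ContinuousAt (fun V : Fin n → Fin d → ℝ =>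
      frobSq (B - B * (Matrix.of V) * (Matrix.of V)ᵀ)) W :=
    (continuous_gB B).continuousAt
  have hδ : 0 < m₂ * (L - b) := by
    have : 0 < L - b := by linarith
    positivity
  obtain ⟨ε', hε', hcl⟩ := Metric.continuousAt_iff.mp hcont (m₂ * (L - b)) hδ
  refine ⟨ε' ^ 2, by positivity, fun V hV hnear => ?_⟩
  -- from frobSq (V - W) < ε'^2 get dist V W < ε'
  have hdist : @dist (Fin n → Fin d → ℝ) _ V W < ε' := by
    apply (dist_pi_lt_iff hε').mpr
    intro i
    apply (dist_pi_lt_iff hε').mpr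
    intro j
    have h1 : ((V - W) i j) ^ 2 ≤ frobSq (V - W) := entry_sq_le_frobSq _ i j
    have h2 : ((V - W) i j) ^ 2 < ε' ^ 2 := lt_of_le_of_lt h1 hnear
    have h3 : (V - W) i j = V i j - W i j := by simp [Matrix.sub_apply]
    rw [Real.dist_eq, abs_lt]
    constructor <;> nlinarith [h2, hε']
  have hfV : |frobSq (B - B * V * Vᵀ) - frobSq (B - B * W * Wᵀ)| < m₂ * (L - b) := by
    have := hcl hdist
    rwa [Real.dist_eq] at this
  rw [abs_lt] at hfV
  -- B-loss at V is still below L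
  have hbV : (frobSq (B - B * V * Vᵀ) - cB) / m₂ < L := by
    rw [div_lt_iff₀ hm₂']
    have hbeq : b * m₂ = frobSq (B - B * W * Wᵀ) - cB := by
      rw [hb, div_mul_cancel₀ _ hm₂'.ne']
    nlinarith [hfV.2]
  have hmaxW : max L b = L := max_eq_left (le_of_lt hstrict)
  have hkey := hglob V hV
  rw [hmaxW] at hkey
  have hLa : L ≤ (frobSq (A - A * V * Vᵀ) - c) / m₁ := by
    rcases le_or_gt L ((frobSq (A - A * V * Vᵀ) - c) / m₁) with h | h
    · exact h
    · exfalso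
      have : max ((frobSq (A - A * V * Vᵀ) - c) / m₁)
          ((frobSq (B - B * V * Vᵀ) - cB) / m₂) < L := max_lt h hbV
      linarith
  have := mul_le_mul_of_nonneg_right hLa hm₁'.le
  rw [hL, div_mul_cancel₀ _ hm₁'.ne', div_mul_cancel₀ _ hm₁'.ne'] at this
  linarith
end
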